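/- arXiv:1906.06964 — 8 statements merged into one kernel-verified Lean document; each statement's English description precedes it below -/
import Mathlib

section
/- For every k ∈ ℕ and every z ∈ ℂ with 0 < |z| < 1, the series ∑_{b∈ℕ, b even} [b]·b^{2k}·z^{b−1} (the b = 0 term equals 0^{2k}/z, i.e. 1/z if k = 0 and 0 if k ≥ 1) converges with sum equal to deriv((z·d/dz)^{2k} φ)(z) + (1/z if k = 0, else 0), where φ(w) = w²/(1−w²). -/
/-- `[b] = b` for positive `b` and `[0] = 1`. -/
def br (b : ℕ) : ℕ := if b = 0 then 1 else b

/-- The Euler operator `f ↦ (z·d/dz) f`, i.e. `w ↦ w · f'(w)`. -/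
noncomputable def eulerOp (f : ℂ → ℂ) : ℂ → ℂ := fun w => w * deriv f w

/-- `φ(w) = w² / (1 - w²)`. -/
noncomputable def phiFn : ℂ → ℂ := fun w => w ^ 2 / (1 - w ^ 2)

lemma key (n : ℕ) : ∀ z : ℂ, ‖z‖ < 1 →
    HasSum (fun m : ℕ => ((2 * m + 2 : ℕ) : ℂ) ^ n * z ^ (2 * m + 2))
      (eulerOp^[n] phiFn z) := by
  induction n with
  | zero =>
    intro z hz
    have h2 : ‖z ^ 2‖ < 1 := by
      rw [norm_pow]
      exact pow_lt_one₀ (norm_nonneg z) hz (by norm_num)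
    have hg := (hasSum_geometric_of_norm_lt_one h2).mul_left (z ^ 2)
    have : HasSum (fun m : ℕ => z ^ (2 * m + 2)) (z ^ 2 * (1 - z ^ 2)⁻¹) := by
      refine hg.congr_fun fun m => ?_
      rw [← pow_mul]
      ring
    simpa [phiFn, div_eq_mul_inv, Function.iterate_zero] using this
  | succ n ih =>
    intro z hz
    set r : ℝ := (‖z‖ + 1) / 2 with hr
    have hzr : ‖z‖ < r := by rw [hr]; linarith
    have hr0 : 0 < r := lt_of_le_of_lt (norm_nonneg z) hzr
    have hr1 : r < 1 := by rw [hr]; linarith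
    set c : ℕ → ℂ := fun m => ((2 * m + 2 : ℕ) : ℂ) ^ n with hc
    set f : ℕ → ℂ → ℂ := fun m y => c m * y ^ (2 * m + 2) with hf
    set f' : ℕ → ℂ → ℂ := fun m y => c m * ((2 * m + 2 : ℕ) * y ^ (2 * m + 1)) with hf'
    set u : ℕ → ℝ := fun m => ((2 * m + 2 : ℕ) : ℝ) ^ (n + 1) * r ^ (2 * m + 1) with hu'
    -- summability of the bound
    have hsum1 : Summable (fun j : ℕ => (j : ℝ) ^ (n + 1) * r ^ j) :=
      summable_pow_mul_geometric_of_norm_lt_one (n + 1)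
        (by rw [Real.norm_eq_abs, abs_of_pos hr0]; exact hr1)
    have hinj : Function.Injective (fun m : ℕ => 2 * m + 2) := by
      intro a b h; dsimp only at h; omega
    have hsum2 : Summable (fun m : ℕ => ((2 * m + 2 : ℕ) : ℝ) ^ (n + 1) * r ^ (2 * m + 2)) :=
      hsum1.comp_injective hinj
    have hu : Summable u := by
      have := hsum2.mul_left (1 / r)
      refine this.congr fun m => ?_
      rw [hu']
      have : r ^ (2 * m + 2) = r ^ (2 * m + 1) * r := by ring
      rw [this]
      field_simp
    have hderiv : ∀ m : ℕ, ∀ y : ℂ, y ∈ Metric.ball (0 : ℂ) r →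
        HasDerivAt (f m) (f' m y) y := by
      intro m y _
      have h1 := (hasDerivAt_pow (2 * m + 2) y).const_mul (c m)
      simpa [hf, hf', mul_comm, mul_assoc, mul_left_comm] using h1
    have hbound : ∀ m : ℕ, ∀ y : ℂ, y ∈ Metric.ball (0 : ℂ) r → ‖f' m y‖ ≤ u m := by
      intro m y hy
      have hyr : ‖y‖ ≤ r := by
        have := Metric.mem_ball.1 hy
        rw [dist_zero_right] at this
        exact this.le
      have hnorm : ‖f' m y‖ = ((2 * m + 2 : ℕ) : ℝ) ^ (n + 1) * ‖y‖ ^ (2 * m + 1) := by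
        rw [hf', hc, norm_mul, norm_mul, norm_pow, norm_pow, Complex.norm_natCast, pow_succ]
        ring
      rw [hnorm, hu']
      exact mul_le_mul_of_nonneg_left
        (pow_le_pow_left₀ (norm_nonneg y) hyr _) (by positivity)
    have hz0ball : z ∈ Metric.ball (0 : ℂ) r := by
      rw [Metric.mem_ball, dist_zero_right]; exact hzr
    have hf0 : Summable fun m => f m z := (ih z hz).summable
    have hD : HasDerivAt (fun y => ∑' m, f m y) (∑' m, f' m z) z :=
      hasDerivAt_tsum_of_isPreconnected hu Metric.isOpen_ball
        (convex_ball (0 : ℂ) r).isPreconnected hderiv hbound hz0ball hf0 hz0ball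
    -- the iterate agrees with the tsum on the unit ball
    have heq : deriv (eulerOp^[n] phiFn) z = ∑' m, f' m z := by
      have hev : (eulerOp^[n] phiFn) =ᶠ[nhds z] (fun y => ∑' m, f m y) := by
        filter_upwards [Metric.ball_mem_nhds z (by linarith : (0:ℝ) < 1 - ‖z‖)] with w hw
        have hw1 : ‖w‖ < 1 := by
          have := Metric.mem_ball.1 hw
          calc ‖w‖ = ‖z + (w - z)‖ := by ring_nf
            _ ≤ ‖z‖ + ‖w - z‖ := norm_add_le _ _
            _ < ‖z‖ + (1 - ‖z‖) := by
                have : dist w z < 1 - ‖z‖ := this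
                rw [dist_eq_norm] at this
                linarith
            _ = 1 := by ring
        exact (ih w hw1).tsum_eq.symm
      rw [hev.deriv_eq]
      exact hD.deriv
    have hsumf' : Summable (fun m => f' m z) :=
      Summable.of_norm_bounded hu (fun m => hbound m z hz0ball)
    have hmain : HasSum (fun m => f' m z) (deriv (eulerOp^[n] phiFn) z) := by
      rw [heq]; exact hsumf'.hasSum
    have hmul := hmain.mul_left z
    rw [Function.iterate_succ_apply']
    show HasSum _ (eulerOp (eulerOp^[n] phiFn) z)
    refine hmul.congr_fun fun m => ?_
    rw [hf', hc]
    push_cast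
    ring

/-- Even basis elements of the Do–Norbury space `V(z)`: for `0 < |z| < 1`,
`∑_{b even} [b]·b^{2k}·z^{b-1} = d/dz (z·d/dz)^{2k} (z²/(1-z²)) + δ_{k,0}/z`. -/
theorem even_basis_closed_form (k : ℕ) (z : ℂ) (hz0 : 0 < ‖z‖) (hz1 : ‖z‖ < 1) :
    HasSum
      (fun b : ℕ => if Even b then
        (br b : ℂ) * (b : ℂ) ^ (2 * k) * z ^ ((b : ℤ) - 1) else 0)
      (deriv (eulerOp^[2 * k] phiFn) z + if k = 0 then 1 / z else 0) := by
  have hzne : z ≠ 0 := by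
    intro h; rw [h, norm_zero] at hz0; exact lt_irrefl 0 hz0
  set g : ℕ → ℂ := fun b => if Even b then
      (br b : ℂ) * (b : ℂ) ^ (2 * k) * z ^ ((b : ℤ) - 1) else 0 with hg
  set D : ℂ := deriv (eulerOp^[2 * k] phiFn) z with hD
  -- the key sum at order 2k+1, divided by z
  have h1 := (key (2 * k + 1) z hz1).div_const z
  -- eulerOp^[2k+1] phiFn z = z * D
  have h2 : eulerOp^[2 * k + 1] phiFn z = z * D := by
    rw [Function.iterate_succ_apply']; rfl
  have h3 : eulerOp^[2 * k + 1] phiFn z / z = D := by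
    rw [h2, mul_comm, mul_div_assoc, div_self hzne, mul_one]
  rw [h3] at h1
  -- identify terms with g (2*(m+1))
  have h4 : HasSum (fun m : ℕ => g (2 * (m + 1))) D := by
    refine h1.congr_fun fun m => ?_
    have heven : Even (2 * (m + 1)) := ⟨m + 1, by ring⟩
    have hbr : br (2 * (m + 1)) = 2 * (m + 1) := by
      unfold br; simp
    have hzpow : z ^ (((2 * (m + 1) : ℕ) : ℤ) - 1) = z ^ (2 * m + 1) := by
      have : ((2 * (m + 1) : ℕ) : ℤ) - 1 = ((2 * m + 1 : ℕ) : ℤ) := by push_cast; ring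
      rw [this, zpow_natCast]
    rw [hg]
    simp only [heven, if_true, hbr, hzpow]
    field_simp
    push_cast
    ring
  -- add back the b = 0 term
  have hg0 : g 0 = if k = 0 then 1 / z else 0 := by
    rw [hg]
    simp only [Even.zero, if_true, Nat.cast_zero, Nat.cast_one]
    rcases Nat.eq_zero_or_pos k with hk | hk
    · subst hk; simp [br, zpow_neg, one_div]
    · have : k ≠ 0 := hk.ne'
      simp [br, this, zero_pow (by omega : 2 * k ≠ 0)]
  have h5 : HasSum (fun m : ℕ => g (2 * m)) (D + g 0) := by
    have := (hasSum_nat_add_iff (f := fun m : ℕ => g (2 * m)) 1).1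
      (h4.congr_fun fun m => by rw [Nat.mul_add, Nat.mul_one])
    simpa using this
  -- extend over all naturals
  have hinj2 : Function.Injective (fun m : ℕ => 2 * m) := fun a b h => by
    dsimp only at h; omega
  have hzero : ∀ b : ℕ, b ∉ Set.range (fun m : ℕ => 2 * m) → g b = 0 := by
    intro b hb
    rw [hg]
    have : ¬ Even b := by
      intro ⟨m, hm⟩
      exact hb ⟨m, by dsimp only; omega⟩
    simp [this]
  have := (hinj2.hasSum_iff hzero).1 (h5.congr_fun fun m => rfl)
  rw [hg0] at this
  exact this
end

section
/- Let D* = {z ∈ ℂ : 0 < |z| < 1}. For k ∈ ℕ define functions on D*: ξᵉₖ(z) = deriv((z·d/dz)^{2k} φ)(z) + (1/z if k = 0, else 0) with φ(w) = w²/(1−w²), and ξᵒₖ(z) = deriv((z·d/dz)^{2k} ψ)(z) with ψ(w) = w/(1−w²). Then the family of functions {ξᵉₖ : k ∈ ℕ} ∪ {ξᵒₖ : k ∈ ℕ} (indexed by ℕ ⊕ ℕ) is linearly independent over ℂ in the vector space of complex-valued functions on D*. -/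
/-- `ψ(w) = w / (1 - w²)`. -/
noncomputable def psiFn : ℂ → ℂ := fun w => w / (1 - w ^ 2)

/-- The even basis element `ξᵉₖ = d/dz (z·d/dz)^{2k} (z²/(1-z²)) + δ_{k,0}/z`. -/
noncomputable def xiEven (k : ℕ) : ℂ → ℂ :=
  fun z => deriv (eulerOp^[2 * k] phiFn) z + if k = 0 then 1 / z else 0

/-- The odd basis element `ξᵒₖ = d/dz (z·d/dz)^{2k} (z/(1-z²))`. -/
noncomputable def xiOdd (k : ℕ) : ℂ → ℂ :=
  fun z => deriv (eulerOp^[2 * k] psiFn) z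

/-- The punctured unit disc `{z : ℂ | 0 < |z| < 1}`. -/
def PuncturedDisc : Type := {z : ℂ // 0 < ‖z‖ ∧ ‖z‖ < 1}

open Finset

noncomputable def uF (j : ℕ) : ℂ → ℂ := fun z => ((1 - z)⁻¹) ^ j
noncomputable def vF (j : ℕ) : ℂ → ℂ := fun z => ((1 + z)⁻¹) ^ j

noncomputable def cs : ℕ → ℕ → ℂ
  | 0, j => if j = 1 then 1/2 else 0
  | (n+1), j => ((j - 1 : ℕ) : ℂ) * cs n (j - 1) - (j : ℂ) * cs n j

lemma cs_high : ∀ n j, n + 1 < j → cs n j = 0 := by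
  intro n
  induction n with
  | zero => intro j hj; simp [cs]; omega
  | succ n ih =>
    intro j hj
    have h1 : cs n (j-1) = 0 := ih _ (by omega)
    have h2 : cs n j = 0 := ih _ (by omega)
    simp [cs, h1, h2]

lemma cs_top : ∀ n, cs n (n + 1) = ((Nat.factorial n : ℕ) : ℂ) / 2 := by
  intro n
  induction n with
  | zero => simp [cs]
  | succ n ih =>
    have h2 : cs n (n + 2) = 0 := cs_high n (n+2) (by omega)
    simp only [cs, (show n + 1 + 1 - 1 = n + 1 from rfl), h2, ih]
    push_cast [Nat.factorial_succ]
    ring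

lemma hasDerivAt_one_sub_inv {z : ℂ} (hz : (1:ℂ) - z ≠ 0) :
    HasDerivAt (fun w : ℂ => (1 - w)⁻¹) (((1 - z)⁻¹)^2) z := by
  have h : HasDerivAt (fun w : ℂ => 1 - w) (-1) z := by
    simpa using (hasDerivAt_id z).const_sub 1
  have := h.inv hz
  refine this.congr_deriv ?_
  field_simp

lemma hasDerivAt_one_add_inv {z : ℂ} (hz : (1:ℂ) + z ≠ 0) :
    HasDerivAt (fun w : ℂ => (1 + w)⁻¹) (-(((1 + z)⁻¹)^2)) z := by
  have h : HasDerivAt (fun w : ℂ => 1 + w) 1 z := by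
    simpa using (hasDerivAt_id z).const_add 1
  have := h.inv hz
  refine this.congr_deriv ?_
  field_simp

lemma hasDerivAt_uF (j : ℕ) {z : ℂ} (hz : (1:ℂ) - z ≠ 0) :
    HasDerivAt (uF j) ((j : ℂ) * uF (j+1) z) z := by
  have := (hasDerivAt_one_sub_inv hz).pow j
  refine this.congr_deriv ?_
  unfold uF
  rcases Nat.eq_zero_or_pos j with h | h
  · simp [h]
  · have : j - 1 + 1 + 1 = j + 1 := by omega
    rw [← this]
    ring

lemma hasDerivAt_vF (j : ℕ) {z : ℂ} (hz : (1:ℂ) + z ≠ 0) :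
    HasDerivAt (vF j) (-((j : ℂ) * vF (j+1) z)) z := by
  have := (hasDerivAt_one_add_inv hz).pow j
  refine this.congr_deriv ?_
  unfold vF
  rcases Nat.eq_zero_or_pos j with h | h
  · simp [h]
  · have : j - 1 + 1 + 1 = j + 1 := by omega
    rw [← this]
    ring

lemma z_mul_uF (j : ℕ) {z : ℂ} (hz : (1:ℂ) - z ≠ 0) :
    z * uF (j+1) z = uF (j+1) z - uF j z := by
  unfold uF
  have h : (1 - z) * ((1-z)⁻¹)^(j+1) = ((1-z)⁻¹)^j := by
    rw [pow_succ]; field_simp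
  calc z * ((1-z)⁻¹)^(j+1) = ((1-z)⁻¹)^(j+1) - (1-z) * ((1-z)⁻¹)^(j+1) := by ring
  _ = _ := by rw [h]

lemma z_mul_vF (j : ℕ) {z : ℂ} (hz : (1:ℂ) + z ≠ 0) :
    z * vF (j+1) z = vF j z - vF (j+1) z := by
  unfold vF
  have h : (1 + z) * ((1+z)⁻¹)^(j+1) = ((1+z)⁻¹)^j := by
    rw [pow_succ]; field_simp
  calc z * ((1+z)⁻¹)^(j+1) = (1+z) * ((1+z)⁻¹)^(j+1) - ((1+z)⁻¹)^(j+1) := by ring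
  _ = _ := by rw [h]

/-- The key finite-sum recursion step. -/
lemma euler_step (n : ℕ) (ε : ℂ) {z : ℂ} (h1 : (1:ℂ) - z ≠ 0) (h2 : (1:ℂ) + z ≠ 0) :
    z * ∑ j ∈ range (n+2), cs n j * ((j : ℂ) * uF (j+1) z - ε * ((j:ℂ) * vF (j+1) z)) =
      ∑ j ∈ range (n+3), cs (n+1) j * (uF j z + ε * vF j z) := by
  have key : ∀ j, z * (cs n j * ((j : ℂ) * uF (j+1) z - ε * ((j:ℂ) * vF (j+1) z)))
      = ((j:ℂ) * cs n j * (uF (j+1) z + ε * vF (j+1) z))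
        - ((j:ℂ) * cs n j * (uF j z + ε * vF j z)) := by
    intro j
    have hu := z_mul_uF j h1
    have hv := z_mul_vF j h2
    calc z * (cs n j * ((j : ℂ) * uF (j+1) z - ε * ((j:ℂ) * vF (j+1) z)))
        = (j:ℂ) * cs n j * (z * uF (j+1) z) - ε * ((j:ℂ) * cs n j * (z * vF (j+1) z)) := by ring
      _ = (j:ℂ) * cs n j * (uF (j+1) z - uF j z) - ε * ((j:ℂ) * cs n j * (vF j z - vF (j+1) z)) := by
          rw [hu, hv]
      _ = _ := by ring
  rw [mul_sum]
  simp only [key]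
  rw [sum_sub_distrib]
  have hL : ∑ j ∈ range (n+2), (j:ℂ) * cs n j * (uF (j+1) z + ε * vF (j+1) z)
      = ∑ j ∈ range (n+3), (((j-1 : ℕ) : ℂ) * cs n (j-1) * (uF j z + ε * vF j z)) := by
    rw [Finset.sum_range_succ' (fun j => (((j-1 : ℕ) : ℂ) * cs n (j-1) * (uF j z + ε * vF j z))) (n+2)]
    simp
  have hR : ∑ j ∈ range (n+2), (j:ℂ) * cs n j * (uF j z + ε * vF j z)
      = ∑ j ∈ range (n+3), (j:ℂ) * cs n j * (uF j z + ε * vF j z) := by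
    rw [Finset.sum_range_succ (fun j => (j:ℂ) * cs n j * (uF j z + ε * vF j z)) (n+2),
      cs_high n (n+2) (by omega)]
    ring
  rw [hL, hR, ← sum_sub_distrib]
  apply Finset.sum_congr rfl
  intro j _
  show _ = cs (n+1) j * _
  simp only [cs]
  ring

lemma ball_facts {z : ℂ} (hz : z ∈ Metric.ball (0:ℂ) 1) :
    (1:ℂ) - z ≠ 0 ∧ (1:ℂ) + z ≠ 0 := by
  rw [mem_ball_zero_iff] at hz
  constructor
  · intro h
    rw [sub_eq_zero] at h
    rw [← h] at hz
    simp at hz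
  · intro h
    have : z = -1 := by linear_combination h
    rw [this] at hz
    simp at hz

lemma hasDerivAt_S (n : ℕ) (ε : ℂ) {z : ℂ} (h1 : (1:ℂ) - z ≠ 0) (h2 : (1:ℂ) + z ≠ 0) :
    HasDerivAt (fun w => ∑ j ∈ range (n+2), cs n j * (uF j w + ε * vF j w))
      (∑ j ∈ range (n+2), cs n j * ((j:ℂ) * uF (j+1) z - ε * ((j:ℂ) * vF (j+1) z))) z := by
  apply HasDerivAt.fun_sum
  intro j _
  have hu := hasDerivAt_uF j h1
  have hv := hasDerivAt_vF j h2
  have := (hu.add (hv.const_mul ε)).const_mul (cs n j)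
  refine this.congr_deriv ?_
  ring

lemma rep_aux (f : ℂ → ℂ) (ε : ℂ) (c0 : ℂ)
    (hbase : ∀ z ∈ Metric.ball (0:ℂ) 1,
      f z = c0 + ∑ j ∈ range 2, cs 0 j * (uF j z + ε * vF j z)) :
    ∀ n, ∀ z ∈ Metric.ball (0:ℂ) 1,
      eulerOp^[n] f z =
        (if n = 0 then c0 else 0) + ∑ j ∈ range (n+2), cs n j * (uF j z + ε * vF j z) := by
  intro n
  induction n with
  | zero => intro z hz; simpa using hbase z hz
  | succ n ih =>
    intro z hz
    obtain ⟨h1, h2⟩ := ball_facts hz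
    have hev : eulerOp^[n] f =ᶠ[nhds z]
        (fun w => (if n = 0 then c0 else 0) + ∑ j ∈ range (n+2), cs n j * (uF j w + ε * vF j w)) :=
      Filter.eventuallyEq_of_mem (Metric.isOpen_ball.mem_nhds hz) (fun w hw => ih w hw)
    rw [Function.iterate_succ_apply']
    show z * deriv (eulerOp^[n] f) z = _
    rw [hev.deriv_eq]
    have hd := ((hasDerivAt_const z (if n = 0 then c0 else 0)).fun_add (hasDerivAt_S n ε h1 h2)).deriv
    rw [hd, zero_add, euler_step n ε h1 h2]
    simp

lemma rep_phi : ∀ n, ∀ z ∈ Metric.ball (0:ℂ) 1,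
    eulerOp^[n] phiFn z =
      (if n = 0 then (-1:ℂ) else 0) + ∑ j ∈ range (n+2), cs n j * (uF j z + 1 * vF j z) := by
  apply rep_aux
  intro z hz
  obtain ⟨h1, h2⟩ := ball_facts hz
  have h3 : (1:ℂ) - z^2 ≠ 0 := by
    have : (1:ℂ) - z^2 = (1-z)*(1+z) := by ring
    rw [this]
    exact mul_ne_zero h1 h2
  simp only [phiFn, uF, vF, Finset.sum_range_succ, Finset.sum_range_zero, cs]
  norm_num
  field_simp
  ring

lemma rep_psi : ∀ n, ∀ z ∈ Metric.ball (0:ℂ) 1,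
    eulerOp^[n] psiFn z =
      (if n = 0 then (0:ℂ) else 0) + ∑ j ∈ range (n+2), cs n j * (uF j z + (-1) * vF j z) := by
  apply rep_aux
  intro z hz
  obtain ⟨h1, h2⟩ := ball_facts hz
  have h3 : (1:ℂ) - z^2 ≠ 0 := by
    have : (1:ℂ) - z^2 = (1-z)*(1+z) := by ring
    rw [this]
    exact mul_ne_zero h1 h2
  simp only [psiFn, uF, vF, Finset.sum_range_succ, Finset.sum_range_zero, cs]
  norm_num
  field_simp
  ring

lemma rep_xiEven (k : ℕ) {z : ℂ} (hz : z ∈ Metric.ball (0:ℂ) 1) :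
    xiEven k z = (∑ j ∈ range (2*k+2),
        cs (2*k) j * ((j:ℂ) * uF (j+1) z - 1 * ((j:ℂ) * vF (j+1) z)))
      + (if k = 0 then 1/z else 0) := by
  obtain ⟨h1, h2⟩ := ball_facts hz
  have hev : eulerOp^[2*k] phiFn =ᶠ[nhds z]
      (fun w => (if 2*k = 0 then (-1:ℂ) else 0)
        + ∑ j ∈ range (2*k+2), cs (2*k) j * (uF j w + 1 * vF j w)) :=
    Filter.eventuallyEq_of_mem (Metric.isOpen_ball.mem_nhds hz) (fun w hw => rep_phi (2*k) w hw)
  unfold xiEven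
  rw [hev.deriv_eq,
    ((hasDerivAt_const z (if 2*k = 0 then (-1:ℂ) else 0)).fun_add (hasDerivAt_S (2*k) 1 h1 h2)).deriv,
    zero_add]

lemma rep_xiOdd (k : ℕ) {z : ℂ} (hz : z ∈ Metric.ball (0:ℂ) 1) :
    xiOdd k z = ∑ j ∈ range (2*k+2),
        cs (2*k) j * ((j:ℂ) * uF (j+1) z - (-1) * ((j:ℂ) * vF (j+1) z)) := by
  obtain ⟨h1, h2⟩ := ball_facts hz
  have hev : eulerOp^[2*k] psiFn =ᶠ[nhds z]
      (fun w => (if 2*k = 0 then (0:ℂ) else 0)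
        + ∑ j ∈ range (2*k+2), cs (2*k) j * (uF j w + (-1) * vF j w)) :=
    Filter.eventuallyEq_of_mem (Metric.isOpen_ball.mem_nhds hz) (fun w hw => rep_psi (2*k) w hw)
  unfold xiOdd
  rw [hev.deriv_eq,
    ((hasDerivAt_const z (if 2*k = 0 then (0:ℂ) else 0)).fun_add (hasDerivAt_S (2*k) (-1) h1 h2)).deriv,
    zero_add]

open Filter Topology

noncomputable def Mconst (n : ℕ) : ℂ := ((Nat.factorial (2*n+1) : ℕ) : ℂ) / 2

lemma Mconst_ne_zero (n : ℕ) : Mconst n ≠ 0 := by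
  unfold Mconst
  exact div_ne_zero (Nat.cast_ne_zero.2 (Nat.factorial_ne_zero _)) two_ne_zero

lemma tendsto_coe_real (x : ℝ) (s : Set ℝ) :
    Tendsto (fun t : ℝ => (t:ℂ)) (nhdsWithin x s) (nhds (x:ℂ)) :=
  (Complex.continuous_ofReal.tendsto x).mono_left nhdsWithin_le_nhds

lemma tendsto_one_sub_coe : Tendsto (fun t : ℝ => 1 - (t:ℂ)) (nhdsWithin 1 (Set.Iio 1)) (nhds 0) := by
  have h : Tendsto (fun t : ℝ => 1 - (t:ℂ)) (nhdsWithin 1 (Set.Iio 1)) (nhds (1 - ((1:ℝ):ℂ))) :=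
    Tendsto.sub tendsto_const_nhds (tendsto_coe_real 1 (Set.Iio 1))
  simpa using h

lemma tendsto_one_add_coe : Tendsto (fun t : ℝ => 1 + (t:ℂ)) (nhdsWithin (-1) (Set.Ioi (-1))) (nhds 0) := by
  have h : Tendsto (fun t : ℝ => 1 + (t:ℂ)) (nhdsWithin (-1) (Set.Ioi (-1)))
      (nhds (1 + ((-1:ℝ):ℂ))) :=
    Tendsto.add tendsto_const_nhds (tendsto_coe_real (-1) (Set.Ioi (-1)))
  simpa using h

lemma uL_lt (j J : ℕ) (h : j < J) :
    Tendsto (fun t : ℝ => (1-(t:ℂ))^J * uF j t) (nhdsWithin 1 (Set.Iio 1)) (nhds 0) := by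
  obtain ⟨m, hm, rfl⟩ : ∃ m, m ≠ 0 ∧ J = m + j := ⟨J - j, by omega, by omega⟩
  have h1 : Tendsto (fun t : ℝ => (1-(t:ℂ))^m) (nhdsWithin 1 (Set.Iio 1)) (nhds 0) := by
    have := tendsto_one_sub_coe.pow m
    simpa [zero_pow hm] using this
  apply h1.congr'
  filter_upwards [self_mem_nhdsWithin] with t ht
  have hne : (1:ℂ) - (t:ℂ) ≠ 0 := by
    intro hc
    have h2 : ((t:ℝ):ℂ) = ((1:ℝ):ℂ) := by push_cast; linear_combination -hc
    rw [Complex.ofReal_inj] at h2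
    simp only [Set.mem_Iio] at ht
    linarith
  unfold uF
  rw [pow_add, mul_assoc, ← mul_pow, mul_inv_cancel₀ hne, one_pow, mul_one]

lemma uL_eq (J : ℕ) :
    Tendsto (fun t : ℝ => (1-(t:ℂ))^J * uF J t) (nhdsWithin 1 (Set.Iio 1)) (nhds 1) := by
  apply tendsto_const_nhds.congr'
  filter_upwards [self_mem_nhdsWithin] with t ht
  have hne : (1:ℂ) - (t:ℂ) ≠ 0 := by
    intro hc
    have h2 : ((t:ℝ):ℂ) = ((1:ℝ):ℂ) := by push_cast; linear_combination -hc
    rw [Complex.ofReal_inj] at h2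
    simp only [Set.mem_Iio] at ht
    linarith
  unfold uF
  rw [← mul_pow, mul_inv_cancel₀ hne, one_pow]

lemma vL (j J : ℕ) (hJ : J ≠ 0) :
    Tendsto (fun t : ℝ => (1-(t:ℂ))^J * vF j t) (nhdsWithin 1 (Set.Iio 1)) (nhds 0) := by
  have h1 : Tendsto (fun t : ℝ => (1-(t:ℂ))^J) (nhdsWithin 1 (Set.Iio 1)) (nhds 0) := by
    simpa [zero_pow hJ] using tendsto_one_sub_coe.pow J
  have hc : ContinuousAt (vF j) 1 := by
    apply ContinuousAt.pow
    apply ContinuousAt.inv₀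
    · exact (continuous_const.add continuous_id).continuousAt
    · norm_num
  have h2 : Tendsto (fun t : ℝ => vF j (t:ℂ)) (nhdsWithin 1 (Set.Iio 1)) (nhds (vF j 1)) :=
    (hc.tendsto).comp (tendsto_coe_real 1 (Set.Iio 1))
  simpa using h1.mul h2

lemma invL (J : ℕ) (hJ : J ≠ 0) :
    Tendsto (fun t : ℝ => (1-(t:ℂ))^J * (1/(t:ℂ))) (nhdsWithin 1 (Set.Iio 1)) (nhds 0) := by
  have h1 : Tendsto (fun t : ℝ => (1-(t:ℂ))^J) (nhdsWithin 1 (Set.Iio 1)) (nhds 0) := by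
    simpa [zero_pow hJ] using tendsto_one_sub_coe.pow J
  have hc : ContinuousAt (fun z : ℂ => 1/z) 1 := by
    apply ContinuousAt.div
    · exact continuousAt_const
    · exact continuousAt_id
    · norm_num
  have h2 : Tendsto (fun t : ℝ => 1/(t:ℂ)) (nhdsWithin 1 (Set.Iio 1)) (nhds (1/(1:ℂ))) :=
    (hc.tendsto).comp (tendsto_coe_real 1 (Set.Iio 1))
  simpa using h1.mul h2

lemma vM_lt (j J : ℕ) (h : j < J) :
    Tendsto (fun t : ℝ => (1+(t:ℂ))^J * vF j t) (nhdsWithin (-1) (Set.Ioi (-1))) (nhds 0) := by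
  obtain ⟨m, hm, rfl⟩ : ∃ m, m ≠ 0 ∧ J = m + j := ⟨J - j, by omega, by omega⟩
  have h1 : Tendsto (fun t : ℝ => (1+(t:ℂ))^m) (nhdsWithin (-1) (Set.Ioi (-1))) (nhds 0) := by
    have := tendsto_one_add_coe.pow m
    simpa [zero_pow hm] using this
  apply h1.congr'
  filter_upwards [self_mem_nhdsWithin] with t ht
  have hne : (1:ℂ) + (t:ℂ) ≠ 0 := by
    intro hc
    have h2 : ((t:ℝ):ℂ) = ((-1:ℝ):ℂ) := by push_cast; linear_combination hc
    rw [Complex.ofReal_inj] at h2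
    simp only [Set.mem_Ioi] at ht
    linarith
  unfold vF
  rw [pow_add, mul_assoc, ← mul_pow, mul_inv_cancel₀ hne, one_pow, mul_one]

lemma vM_eq (J : ℕ) :
    Tendsto (fun t : ℝ => (1+(t:ℂ))^J * vF J t) (nhdsWithin (-1) (Set.Ioi (-1))) (nhds 1) := by
  apply tendsto_const_nhds.congr'
  filter_upwards [self_mem_nhdsWithin] with t ht
  have hne : (1:ℂ) + (t:ℂ) ≠ 0 := by
    intro hc
    have h2 : ((t:ℝ):ℂ) = ((-1:ℝ):ℂ) := by push_cast; linear_combination hc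
    rw [Complex.ofReal_inj] at h2
    simp only [Set.mem_Ioi] at ht
    linarith
  unfold vF
  rw [← mul_pow, mul_inv_cancel₀ hne, one_pow]

lemma uM (j J : ℕ) (hJ : J ≠ 0) :
    Tendsto (fun t : ℝ => (1+(t:ℂ))^J * uF j t) (nhdsWithin (-1) (Set.Ioi (-1))) (nhds 0) := by
  have h1 : Tendsto (fun t : ℝ => (1+(t:ℂ))^J) (nhdsWithin (-1) (Set.Ioi (-1))) (nhds 0) := by
    simpa [zero_pow hJ] using tendsto_one_add_coe.pow J
  have hc : ContinuousAt (uF j) (-1) := by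
    apply ContinuousAt.pow
    apply ContinuousAt.inv₀
    · exact (continuous_const.sub continuous_id).continuousAt
    · norm_num
  have hcoe : Tendsto (fun t : ℝ => (t:ℂ)) (nhdsWithin (-1) (Set.Ioi (-1))) (nhds (-1:ℂ)) := by
    simpa using tendsto_coe_real (-1) (Set.Ioi (-1))
  have h2 : Tendsto (fun t : ℝ => uF j (t:ℂ)) (nhdsWithin (-1) (Set.Ioi (-1)))
      (nhds (uF j (-1))) := (hc.tendsto).comp hcoe
  simpa using h1.mul h2

lemma invM (J : ℕ) (hJ : J ≠ 0) :
    Tendsto (fun t : ℝ => (1+(t:ℂ))^J * (1/(t:ℂ))) (nhdsWithin (-1) (Set.Ioi (-1))) (nhds 0) := by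
  have h1 : Tendsto (fun t : ℝ => (1+(t:ℂ))^J) (nhdsWithin (-1) (Set.Ioi (-1))) (nhds 0) := by
    simpa [zero_pow hJ] using tendsto_one_add_coe.pow J
  have hc : ContinuousAt (fun z : ℂ => 1/z) (-1) := by
    apply ContinuousAt.div
    · exact continuousAt_const
    · exact continuousAt_id
    · norm_num
  have hcoe : Tendsto (fun t : ℝ => (t:ℂ)) (nhdsWithin (-1) (Set.Ioi (-1))) (nhds (-1:ℂ)) := by
    simpa using tendsto_coe_real (-1) (Set.Ioi (-1))
  have h2 : Tendsto (fun t : ℝ => 1/(t:ℂ)) (nhdsWithin (-1) (Set.Ioi (-1))) (nhds (1/(-1:ℂ))) :=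
    (hc.tendsto).comp hcoe
  simpa using h1.mul h2

lemma value_plus (k n : ℕ) (hk : k ≤ n) (ε : ℂ) :
    ∑ j ∈ range (2*k+2), cs (2*k) j *
        ((j:ℂ) * (if j+1 = 2*n+2 then (1:ℂ) else 0) - ε * ((j:ℂ) * (0:ℂ)))
      = (if k = n then Mconst n else 0) := by
  rcases eq_or_lt_of_le hk with rfl | hlt
  · rw [if_pos rfl]
    rw [Finset.sum_eq_single (2*k+1)]
    · rw [if_pos (by omega), cs_top (2*k)]
      unfold Mconst
      rw [show 2*k+1 = (2*k)+1 from rfl, Nat.factorial_succ]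
      push_cast
      ring
    · intro j hj hne
      simp only [mem_range] at hj
      rw [if_neg (by omega)]
      ring
    · intro h
      exact absurd (mem_range.2 (by omega)) h
  · rw [if_neg (by omega)]
    apply Finset.sum_eq_zero
    intro j hj
    simp only [mem_range] at hj
    rw [if_neg (by omega)]
    ring

lemma value_minus (k n : ℕ) (hk : k ≤ n) (ε : ℂ) :
    ∑ j ∈ range (2*k+2), cs (2*k) j *
        ((j:ℂ) * (0:ℂ) - ε * ((j:ℂ) * (if j+1 = 2*n+2 then (1:ℂ) else 0)))
      = (if k = n then -ε * Mconst n else 0) := by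
  rcases eq_or_lt_of_le hk with rfl | hlt
  · rw [if_pos rfl]
    rw [Finset.sum_eq_single (2*k+1)]
    · rw [if_pos (by omega), cs_top (2*k)]
      unfold Mconst
      rw [show 2*k+1 = (2*k)+1 from rfl, Nat.factorial_succ]
      push_cast
      ring
    · intro j hj hne
      simp only [mem_range] at hj
      rw [if_neg (by omega)]
      ring
    · intro h
      exact absurd (mem_range.2 (by omega)) h
  · rw [if_neg (by omega)]
    apply Finset.sum_eq_zero
    intro j hj
    simp only [mem_range] at hj
    rw [if_neg (by omega)]
    ring

lemma tendsto_scaled_sum_plus (k n : ℕ) (hk : k ≤ n) (ε : ℂ) :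
    Tendsto (fun t : ℝ => (1-(t:ℂ))^(2*n+2) *
        ∑ j ∈ range (2*k+2), cs (2*k) j * ((j:ℂ) * uF (j+1) t - ε * ((j:ℂ) * vF (j+1) t)))
      (nhdsWithin 1 (Set.Iio 1)) (nhds (if k = n then Mconst n else 0)) := by
  have hterm : ∀ j ∈ range (2*k+2), Tendsto (fun t : ℝ =>
      cs (2*k) j * ((j:ℂ) * ((1-(t:ℂ))^(2*n+2) * uF (j+1) t)
        - ε * ((j:ℂ) * ((1-(t:ℂ))^(2*n+2) * vF (j+1) t))))
      (nhdsWithin 1 (Set.Iio 1))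
      (nhds (cs (2*k) j * ((j:ℂ) * (if j+1 = 2*n+2 then (1:ℂ) else 0) - ε * ((j:ℂ) * (0:ℂ))))) := by
    intro j hj
    simp only [mem_range] at hj
    apply Tendsto.const_mul
    apply Tendsto.sub
    · apply Tendsto.const_mul
      by_cases hje : j + 1 = 2*n+2
      · rw [if_pos hje, hje]
        exact uL_eq (2*n+2)
      · rw [if_neg hje]
        exact uL_lt (j+1) (2*n+2) (by omega)
    · exact Tendsto.const_mul ε ((vL (j+1) (2*n+2) (by omega)).const_mul (j:ℂ))
  have hsum := tendsto_finset_sum (range (2*k+2)) hterm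
  rw [value_plus k n hk ε] at hsum
  apply hsum.congr
  intro t
  rw [mul_sum]
  apply Finset.sum_congr rfl
  intro j _
  ring

lemma tendsto_scaled_sum_minus (k n : ℕ) (hk : k ≤ n) (ε : ℂ) :
    Tendsto (fun t : ℝ => (1+(t:ℂ))^(2*n+2) *
        ∑ j ∈ range (2*k+2), cs (2*k) j * ((j:ℂ) * uF (j+1) t - ε * ((j:ℂ) * vF (j+1) t)))
      (nhdsWithin (-1) (Set.Ioi (-1))) (nhds (if k = n then -ε * Mconst n else 0)) := by
  have hterm : ∀ j ∈ range (2*k+2), Tendsto (fun t : ℝ =>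
      cs (2*k) j * ((j:ℂ) * ((1+(t:ℂ))^(2*n+2) * uF (j+1) t)
        - ε * ((j:ℂ) * ((1+(t:ℂ))^(2*n+2) * vF (j+1) t))))
      (nhdsWithin (-1) (Set.Ioi (-1)))
      (nhds (cs (2*k) j * ((j:ℂ) * (0:ℂ) - ε * ((j:ℂ) * (if j+1 = 2*n+2 then (1:ℂ) else 0))))) := by
    intro j hj
    simp only [mem_range] at hj
    apply Tendsto.const_mul
    apply Tendsto.sub
    · exact Tendsto.const_mul (j:ℂ) (uM (j+1) (2*n+2) (by omega))
    · apply Tendsto.const_mul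
      apply Tendsto.const_mul
      by_cases hje : j + 1 = 2*n+2
      · rw [if_pos hje, hje]
        exact vM_eq (2*n+2)
      · rw [if_neg hje]
        exact vM_lt (j+1) (2*n+2) (by omega)
  have hsum := tendsto_finset_sum (range (2*k+2)) hterm
  rw [value_minus k n hk ε] at hsum
  apply hsum.congr
  intro t
  rw [mul_sum]
  apply Finset.sum_congr rfl
  intro j _
  ring

lemma tendsto_xiEven_plus (k n : ℕ) (hk : k ≤ n) :
    Tendsto (fun t : ℝ => (1-(t:ℂ))^(2*n+2) * xiEven k (t:ℂ))
      (nhdsWithin 1 (Set.Iio 1)) (nhds (if k = n then Mconst n else 0)) := by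
  have hif : Tendsto (fun t : ℝ => (1-(t:ℂ))^(2*n+2) * (if k = 0 then 1/(t:ℂ) else 0))
      (nhdsWithin 1 (Set.Iio 1)) (nhds 0) := by
    by_cases h : k = 0
    · simp only [if_pos h]
      exact invL (2*n+2) (by omega)
    · simp only [if_neg h, mul_zero]
      exact tendsto_const_nhds
  have hmain := (tendsto_scaled_sum_plus k n hk 1).add hif
  rw [add_zero] at hmain
  apply Tendsto.congr' _ hmain
  filter_upwards [Ioo_mem_nhdsLT_of_mem (show (1:ℝ) ∈ Set.Ioc (1/2:ℝ) 1 by norm_num)] with t ht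
  have hball : (t:ℂ) ∈ Metric.ball (0:ℂ) 1 := by
    rw [mem_ball_zero_iff, Complex.norm_real, Real.norm_eq_abs, abs_lt]
    exact ⟨by linarith [ht.1], ht.2⟩
  rw [rep_xiEven k hball, mul_add]

lemma tendsto_xiOdd_plus (k n : ℕ) (hk : k ≤ n) :
    Tendsto (fun t : ℝ => (1-(t:ℂ))^(2*n+2) * xiOdd k (t:ℂ))
      (nhdsWithin 1 (Set.Iio 1)) (nhds (if k = n then Mconst n else 0)) := by
  apply Tendsto.congr' _ (tendsto_scaled_sum_plus k n hk (-1))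
  filter_upwards [Ioo_mem_nhdsLT_of_mem (show (1:ℝ) ∈ Set.Ioc (1/2:ℝ) 1 by norm_num)] with t ht
  have hball : (t:ℂ) ∈ Metric.ball (0:ℂ) 1 := by
    rw [mem_ball_zero_iff, Complex.norm_real, Real.norm_eq_abs, abs_lt]
    exact ⟨by linarith [ht.1], ht.2⟩
  rw [rep_xiOdd k hball]

lemma tendsto_xiEven_minus (k n : ℕ) (hk : k ≤ n) :
    Tendsto (fun t : ℝ => (1+(t:ℂ))^(2*n+2) * xiEven k (t:ℂ))
      (nhdsWithin (-1) (Set.Ioi (-1))) (nhds (if k = n then -Mconst n else 0)) := by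
  have hif : Tendsto (fun t : ℝ => (1+(t:ℂ))^(2*n+2) * (if k = 0 then 1/(t:ℂ) else 0))
      (nhdsWithin (-1) (Set.Ioi (-1))) (nhds 0) := by
    by_cases h : k = 0
    · simp only [if_pos h]
      exact invM (2*n+2) (by omega)
    · simp only [if_neg h, mul_zero]
      exact tendsto_const_nhds
  have hmain := (tendsto_scaled_sum_minus k n hk 1).add hif
  rw [add_zero] at hmain
  rw [show (if k = n then (-1:ℂ) * Mconst n else 0) = (if k = n then -Mconst n else 0) by
    split_ifs <;> ring] at hmain
  apply Tendsto.congr' _ hmain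
  filter_upwards [Ioo_mem_nhdsGT_of_mem (show (-1:ℝ) ∈ Set.Ico (-1:ℝ) (-1/2) by norm_num)]
    with t ht
  have hball : (t:ℂ) ∈ Metric.ball (0:ℂ) 1 := by
    rw [mem_ball_zero_iff, Complex.norm_real, Real.norm_eq_abs, abs_lt]
    exact ⟨ht.1, by linarith [ht.2]⟩
  rw [rep_xiEven k hball, mul_add]

lemma tendsto_xiOdd_minus (k n : ℕ) (hk : k ≤ n) :
    Tendsto (fun t : ℝ => (1+(t:ℂ))^(2*n+2) * xiOdd k (t:ℂ))
      (nhdsWithin (-1) (Set.Ioi (-1))) (nhds (if k = n then Mconst n else 0)) := by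
  have hmain := tendsto_scaled_sum_minus k n hk (-1)
  rw [show (if k = n then -(-1:ℂ) * Mconst n else 0) = (if k = n then Mconst n else 0) by
    split_ifs <;> ring] at hmain
  apply Tendsto.congr' _ hmain
  filter_upwards [Ioo_mem_nhdsGT_of_mem (show (-1:ℝ) ∈ Set.Ico (-1:ℝ) (-1/2) by norm_num)]
    with t ht
  have hball : (t:ℂ) ∈ Metric.ball (0:ℂ) 1 := by
    rw [mem_ball_zero_iff, Complex.norm_real, Real.norm_eq_abs, abs_lt]
    exact ⟨ht.1, by linarith [ht.2]⟩
  rw [rep_xiOdd k hball]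

def idx : ℕ ⊕ ℕ → ℕ := Sum.elim id id
noncomputable def sg : ℕ ⊕ ℕ → ℂ := Sum.elim (fun _ => -1) (fun _ => 1)

lemma tendsto_xi_plus (i : ℕ ⊕ ℕ) (n : ℕ) (h : idx i ≤ n) :
    Tendsto (fun t : ℝ => (1-(t:ℂ))^(2*n+2) * Sum.elim xiEven xiOdd i (t:ℂ))
      (nhdsWithin 1 (Set.Iio 1)) (nhds (if idx i = n then Mconst n else 0)) := by
  cases i with
  | inl k => exact tendsto_xiEven_plus k n h
  | inr k => exact tendsto_xiOdd_plus k n h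

lemma tendsto_xi_minus (i : ℕ ⊕ ℕ) (n : ℕ) (h : idx i ≤ n) :
    Tendsto (fun t : ℝ => (1+(t:ℂ))^(2*n+2) * Sum.elim xiEven xiOdd i (t:ℂ))
      (nhdsWithin (-1) (Set.Ioi (-1))) (nhds (if idx i = n then sg i * Mconst n else 0)) := by
  cases i with
  | inl k =>
    have h1 := tendsto_xiEven_minus k n h
    simp only [idx, sg, Sum.elim_inl, id] at h1 ⊢
    simp only [neg_one_mul]
    exact h1
  | inr k =>
    have h1 := tendsto_xiOdd_minus k n h
    simp only [idx, sg, Sum.elim_inr, id] at h1 ⊢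
    simp only [one_mul]
    exact h1

def Sfull (n : ℕ) : Finset (ℕ ⊕ ℕ) :=
  ((range (n+1)).image Sum.inl) ∪ ((range (n+1)).image Sum.inr)

lemma mem_Sfull {n : ℕ} {i : ℕ ⊕ ℕ} : i ∈ Sfull n ↔ idx i ≤ n := by
  cases i with
  | inl k => simp [Sfull, idx]
  | inr k => simp [Sfull, idx]

lemma combo_plus (n : ℕ) (g : ℕ ⊕ ℕ → ℂ)
    (h0 : ∀ z : ℂ, 0 < ‖z‖ → ‖z‖ < 1 →
      ∑ i ∈ Sfull n, g i * Sum.elim xiEven xiOdd i z = 0) :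
    g (Sum.inl n) + g (Sum.inr n) = 0 := by
  have hterm : ∀ i ∈ Sfull n, Tendsto
      (fun t : ℝ => g i * ((1-(t:ℂ))^(2*n+2) * Sum.elim xiEven xiOdd i (t:ℂ)))
      (nhdsWithin 1 (Set.Iio 1)) (nhds (g i * (if idx i = n then Mconst n else 0))) :=
    fun i hi => (tendsto_xi_plus i n (mem_Sfull.1 hi)).const_mul (g i)
  have hsum := tendsto_finset_sum (Sfull n) hterm
  have hzero : Tendsto
      (fun t : ℝ => ∑ i ∈ Sfull n, g i * ((1-(t:ℂ))^(2*n+2) * Sum.elim xiEven xiOdd i (t:ℂ)))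
      (nhdsWithin 1 (Set.Iio 1)) (nhds 0) := by
    apply tendsto_const_nhds.congr'
    filter_upwards [Ioo_mem_nhdsLT_of_mem (show (1:ℝ) ∈ Set.Ioc (1/2:ℝ) 1 by norm_num)] with t ht
    have h1 : 0 < ‖(t:ℂ)‖ := by
      rw [Complex.norm_real, Real.norm_eq_abs]
      exact abs_pos.2 (by intro hc; rw [hc] at ht; norm_num at ht)
    have h2 : ‖(t:ℂ)‖ < 1 := by
      rw [Complex.norm_real, Real.norm_eq_abs, abs_lt]
      exact ⟨by linarith [ht.1], ht.2⟩
    have hz := h0 (t:ℂ) h1 h2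
    have hre : ∑ i ∈ Sfull n, g i * ((1-(t:ℂ))^(2*n+2) * Sum.elim xiEven xiOdd i (t:ℂ))
        = (1-(t:ℂ))^(2*n+2) * ∑ i ∈ Sfull n, g i * Sum.elim xiEven xiOdd i (t:ℂ) := by
      rw [mul_sum]
      exact Finset.sum_congr rfl (fun i _ => by ring)
    rw [hre, hz, mul_zero]
  have heq := tendsto_nhds_unique hsum hzero
  have hpair : ({Sum.inl n, Sum.inr n} : Finset (ℕ ⊕ ℕ)) ⊆ Sfull n := by
    intro i hi
    rw [mem_Sfull]
    rcases Finset.mem_insert.1 hi with rfl | hi'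
    · simp [idx]
    · rw [Finset.mem_singleton.1 hi']; simp [idx]
  have hcalc : ∑ i ∈ Sfull n, g i * (if idx i = n then Mconst n else 0)
      = ∑ i ∈ ({Sum.inl n, Sum.inr n} : Finset (ℕ ⊕ ℕ)),
          g i * (if idx i = n then Mconst n else 0) := by
    apply (Finset.sum_subset hpair _).symm
    intro i _ hni
    simp only [Finset.mem_insert, Finset.mem_singleton] at hni
    push_neg at hni
    have : idx i ≠ n := by
      cases i with
      | inl k => simp only [idx, Sum.elim_inl, id]; intro hc; exact hni.1 (by rw [hc])
      | inr k => simp only [idx, Sum.elim_inr, id]; intro hc; exact hni.2 (by rw [hc])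
    rw [if_neg this, mul_zero]
  rw [hcalc, Finset.sum_pair (by simp : (Sum.inl n : ℕ ⊕ ℕ) ≠ Sum.inr n)] at heq
  simp only [idx, Sum.elim_inl, Sum.elim_inr, id, eq_self_iff_true, if_true] at heq
  have hfin : (g (Sum.inl n) + g (Sum.inr n)) * Mconst n = 0 := by linear_combination heq
  exact (mul_eq_zero.1 hfin).resolve_right (Mconst_ne_zero n)

lemma combo_minus (n : ℕ) (g : ℕ ⊕ ℕ → ℂ)
    (h0 : ∀ z : ℂ, 0 < ‖z‖ → ‖z‖ < 1 →
      ∑ i ∈ Sfull n, g i * Sum.elim xiEven xiOdd i z = 0) :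
    -g (Sum.inl n) + g (Sum.inr n) = 0 := by
  have hterm : ∀ i ∈ Sfull n, Tendsto
      (fun t : ℝ => g i * ((1+(t:ℂ))^(2*n+2) * Sum.elim xiEven xiOdd i (t:ℂ)))
      (nhdsWithin (-1) (Set.Ioi (-1)))
      (nhds (g i * (if idx i = n then sg i * Mconst n else 0))) :=
    fun i hi => (tendsto_xi_minus i n (mem_Sfull.1 hi)).const_mul (g i)
  have hsum := tendsto_finset_sum (Sfull n) hterm
  have hzero : Tendsto
      (fun t : ℝ => ∑ i ∈ Sfull n, g i * ((1+(t:ℂ))^(2*n+2) * Sum.elim xiEven xiOdd i (t:ℂ)))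
      (nhdsWithin (-1) (Set.Ioi (-1))) (nhds 0) := by
    apply tendsto_const_nhds.congr'
    filter_upwards [Ioo_mem_nhdsGT_of_mem (show (-1:ℝ) ∈ Set.Ico (-1:ℝ) (-1/2) by norm_num)]
      with t ht
    have h1 : 0 < ‖(t:ℂ)‖ := by
      rw [Complex.norm_real, Real.norm_eq_abs]
      exact abs_pos.2 (by intro hc; rw [hc] at ht; norm_num at ht)
    have h2 : ‖(t:ℂ)‖ < 1 := by
      rw [Complex.norm_real, Real.norm_eq_abs, abs_lt]
      exact ⟨ht.1, by linarith [ht.2]⟩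
    have hz := h0 (t:ℂ) h1 h2
    have hre : ∑ i ∈ Sfull n, g i * ((1+(t:ℂ))^(2*n+2) * Sum.elim xiEven xiOdd i (t:ℂ))
        = (1+(t:ℂ))^(2*n+2) * ∑ i ∈ Sfull n, g i * Sum.elim xiEven xiOdd i (t:ℂ) := by
      rw [mul_sum]
      exact Finset.sum_congr rfl (fun i _ => by ring)
    rw [hre, hz, mul_zero]
  have heq := tendsto_nhds_unique hsum hzero
  have hpair : ({Sum.inl n, Sum.inr n} : Finset (ℕ ⊕ ℕ)) ⊆ Sfull n := by
    intro i hi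
    rw [mem_Sfull]
    rcases Finset.mem_insert.1 hi with rfl | hi'
    · simp [idx]
    · rw [Finset.mem_singleton.1 hi']; simp [idx]
  have hcalc : ∑ i ∈ Sfull n, g i * (if idx i = n then sg i * Mconst n else 0)
      = ∑ i ∈ ({Sum.inl n, Sum.inr n} : Finset (ℕ ⊕ ℕ)),
          g i * (if idx i = n then sg i * Mconst n else 0) := by
    apply (Finset.sum_subset hpair _).symm
    intro i _ hni
    simp only [Finset.mem_insert, Finset.mem_singleton] at hni
    push_neg at hni
    have : idx i ≠ n := by
      cases i with
      | inl k => simp only [idx, Sum.elim_inl, id]; intro hc; exact hni.1 (by rw [hc])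
      | inr k => simp only [idx, Sum.elim_inr, id]; intro hc; exact hni.2 (by rw [hc])
    rw [if_neg this, mul_zero]
  rw [hcalc, Finset.sum_pair (by simp : (Sum.inl n : ℕ ⊕ ℕ) ≠ Sum.inr n)] at heq
  simp only [idx, sg, Sum.elim_inl, Sum.elim_inr, id, eq_self_iff_true, if_true] at heq
  have hfin : (-g (Sum.inl n) + g (Sum.inr n)) * Mconst n = 0 := by linear_combination heq
  exact (mul_eq_zero.1 hfin).resolve_right (Mconst_ne_zero n)

lemma key_s3 : ∀ n (g : ℕ ⊕ ℕ → ℂ),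
    (∀ z : ℂ, 0 < ‖z‖ → ‖z‖ < 1 →
      ∑ i ∈ Sfull n, g i * Sum.elim xiEven xiOdd i z = 0) →
    ∀ i ∈ Sfull n, g i = 0 := by
  intro n
  induction n with
  | zero =>
    intro g h0 i hi
    have hp := combo_plus 0 g h0
    have hm := combo_minus 0 g h0
    have ha : g (Sum.inl 0) = 0 := by linear_combination (hp - hm)/2
    have hb : g (Sum.inr 0) = 0 := by linear_combination (hp + hm)/2
    cases i with
    | inl k =>
      have hk : k = 0 := by simpa [idx] using mem_Sfull.1 hi
      rw [hk]; exact ha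
    | inr k =>
      have hk : k = 0 := by simpa [idx] using mem_Sfull.1 hi
      rw [hk]; exact hb
  | succ n ih =>
    intro g h0
    have hp := combo_plus (n+1) g h0
    have hm := combo_minus (n+1) g h0
    have ha : g (Sum.inl (n+1)) = 0 := by linear_combination (hp - hm)/2
    have hb : g (Sum.inr (n+1)) = 0 := by linear_combination (hp + hm)/2
    have hred : ∀ z : ℂ, 0 < ‖z‖ → ‖z‖ < 1 →
        ∑ i ∈ Sfull n, g i * Sum.elim xiEven xiOdd i z = 0 := by
      intro z hz1 hz2
      have hsub : Sfull n ⊆ Sfull (n+1) := by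
        intro i hi
        rw [mem_Sfull] at *
        omega
      have hzero : ∀ i ∈ Sfull (n+1), i ∉ Sfull n →
          g i * Sum.elim xiEven xiOdd i z = 0 := by
        intro i hi hni
        have h1 := mem_Sfull.1 hi
        have h2 : ¬ idx i ≤ n := fun hc => hni (mem_Sfull.2 hc)
        cases i with
        | inl k =>
          have hk : k = n+1 := by simp only [idx, Sum.elim_inl, id] at h1 h2; omega
          rw [hk, ha, zero_mul]
        | inr k =>
          have hk : k = n+1 := by simp only [idx, Sum.elim_inr, id] at h1 h2; omega
          rw [hk, hb, zero_mul]
      rw [Finset.sum_subset hsub hzero]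
      exact h0 z hz1 hz2
    intro i hi
    rcases Nat.lt_or_ge (idx i) (n+1) with h | h
    · exact ih g hred i (mem_Sfull.2 (by omega))
    · have hidx : idx i = n+1 := by
        have := mem_Sfull.1 hi
        omega
      cases i with
      | inl k =>
        have hk : k = n+1 := by simpa [idx] using hidx
        rw [hk]; exact ha
      | inr k =>
        have hk : k = n+1 := by simpa [idx] using hidx
        rw [hk]; exact hb

/-- The functions `ξᵉₖ` and `ξᵒₖ` (`k ∈ ℕ`), as functions on the punctured unit
disc, are linearly independent over `ℂ`. -/
theorem xi_linearIndependent :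
    LinearIndependent ℂ
      (fun i : ℕ ⊕ ℕ => fun z : PuncturedDisc => Sum.elim xiEven xiOdd i z.1) := by
  rw [linearIndependent_iff']
  intro s g hsum i hi
  set n := s.sup idx with hn
  set g' : ℕ ⊕ ℕ → ℂ := fun j => if j ∈ s then g j else 0 with hg'
  have hsubs : s ⊆ Sfull n := fun j hj => mem_Sfull.2 (Finset.le_sup (f := idx) hj)
  have h0 : ∀ z : ℂ, 0 < ‖z‖ → ‖z‖ < 1 →
      ∑ j ∈ Sfull n, g' j * Sum.elim xiEven xiOdd j z = 0 := by
    intro z hz1 hz2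
    have p : PuncturedDisc := ⟨z, hz1, hz2⟩
    have hpt := congr_fun hsum (⟨z, hz1, hz2⟩ : PuncturedDisc)
    have hs : ∑ j ∈ s, g j * Sum.elim xiEven xiOdd j z = 0 := by
      have h := congr_arg (LinearMap.proj (R := ℂ) (φ := fun _ : PuncturedDisc => ℂ) ⟨z, hz1, hz2⟩) hsum
      simp [map_sum] at h
      exact h
    have hzero : ∀ j ∈ Sfull n, j ∉ s → g' j * Sum.elim xiEven xiOdd j z = 0 := by
      intro j _ hj
      simp [hg', if_neg hj]
    rw [← Finset.sum_subset hsubs hzero]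
    rw [← hs]
    apply Finset.sum_congr rfl
    intro j hj
    rw [hg']
    simp [if_pos hj]
  have := key_s3 n g' h0 i (hsubs hi)
  simpa [hg', if_pos hi] using this
end

section
/- Let P_e, P_o ∈ ℂ[x] be polynomials and define Q : ℕ → ℂ by Q(b) = P_e(b²) for b even and Q(b) = P_o(b²) for b odd. Then there exists a function f : ℂ∖{0,1,−1} → ℂ such that: (i) f is a rational function, i.e. there are polynomials P, R ∈ ℂ[x] with R not identically zero, all complex zeros of R contained in {0,1,−1}, and f(z) = P(z)/R(z) on ℂ∖{0,1,−1}; (ii) f has at most a simple pole at 0, i.e. z ↦ z·f(z) extends holomorphically to a neighbourhood of 0; (iii) for every z with 0 < |z| < 1, the series ∑_{b∈ℕ} [b]·Q(b)·z^{b−1} converges with sum f(z); (iv) f(z) = f(1/z)/z² for every z ∈ ℂ∖{0,1,−1}. -/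
open scoped Topology

open Polynomial Filter

noncomputable def BB : ℕ → Polynomial ℂ
  | 0 => X
  | (k+1) => X * ((1 - X) * (BB k).derivative + C ((k:ℂ)+2) * BB k)

noncomputable def gg (k : ℕ) (z : ℂ) : ℂ := (BB k).eval z / (1 - z) ^ (k+2)

noncomputable def DD (k : ℕ) (z : ℂ) : ℂ :=
  ((BB k).derivative.eval z * (1 - z) + ((k:ℂ)+2) * (BB k).eval z) / (1 - z) ^ (k+3)

lemma gg_hasDerivAt (k : ℕ) {z : ℂ} (hz : z ≠ 1) : HasDerivAt (gg k) (DD k z) z := by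
  have h1 : (1 : ℂ) - z ≠ 0 := sub_ne_zero.mpr (fun h => hz h.symm)
  have hden : HasDerivAt (fun w : ℂ => (1 - w) ^ (k+2))
      (((k:ℂ)+2) * (1 - z) ^ (k+1) * (-1)) z := by
    have : HasDerivAt (fun w : ℂ => 1 - w) (-1) z := (hasDerivAt_id z).const_sub 1
    simpa using this.fun_pow (k+2)
  have hnum : HasDerivAt (fun w : ℂ => (BB k).eval w) ((BB k).derivative.eval z) z :=
    (BB k).hasDerivAt z
  have := hnum.fun_div hden (pow_ne_zero _ h1)
  convert this using 1
  · rfl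
  · rfl
  · rfl
  unfold DD
  rw [div_eq_div_iff (pow_ne_zero _ h1) (pow_ne_zero _ (pow_ne_zero _ h1))]
  · ring

lemma gg_succ (k : ℕ) {z : ℂ} (hz : z ≠ 1) : gg (k+1) z = z * DD k z := by
  have h1 : (1 : ℂ) - z ≠ 0 := sub_ne_zero.mpr (fun h => hz h.symm)
  unfold gg DD
  show (BB (k+1)).eval z / (1-z)^(k+3) = _
  rw [show BB (k+1) = X * ((1 - X) * (BB k).derivative + C ((k:ℂ)+2) * BB k) from rfl]
  simp only [eval_mul, eval_add, eval_X, eval_one, eval_sub, eval_C]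
  ring

lemma gg_hasSum : ∀ (k : ℕ) (z : ℂ), ‖z‖ < 1 → HasSum (fun b : ℕ => (b:ℂ)^(k+1) * z^b) (gg k z)
  | 0 => by
    intro z hz
    have := hasSum_coe_mul_geometric_of_norm_lt_one (𝕜 := ℂ) hz
    have h : gg 0 z = z / (1-z)^2 := by
      unfold gg
      rw [show BB 0 = X from rfl]
      simp
    rw [h]
    refine this.congr_fun fun b => by simp
  | (k+1) => by
    intro z hz
    have hz1 : z ≠ 1 := fun h => by simp [h] at hz
    set r : ℝ := (1 + ‖z‖)/2 with hr
    have hzr : ‖z‖ < r := by rw [hr]; linarith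
    have hr1 : r < 1 := by rw [hr]; linarith
    have hr0 : 0 < r := lt_of_le_of_lt (norm_nonneg z) hzr
    -- the ball
    set t : Set ℂ := Metric.ball 0 r with ht
    have hzt : z ∈ t := by simpa [ht] using hzr
    have hu : Summable (fun b : ℕ => (b:ℝ)^(k+2) * r^(b-1)) := by
      have h0 : Summable (fun b : ℕ => r⁻¹ * ((b:ℝ)^(k+2) * r^b)) :=
        (summable_pow_mul_geometric_of_norm_lt_one (k+2)
          (by rw [Real.norm_eq_abs, abs_of_pos hr0]; exact hr1)).mul_left r⁻¹
      refine h0.congr fun b => ?_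
      rcases Nat.eq_zero_or_pos b with h | h
      · simp [h]
      · have hb : b - 1 + 1 = b := Nat.succ_pred_eq_of_pos h
        rw [← hb, pow_succ]
        field_simp
        simp [Nat.add_sub_cancel_left]
        ring
    have hderiv : ∀ (b : ℕ) (y : ℂ), y ∈ t →
        HasDerivAt (fun w : ℂ => (b:ℂ)^(k+1) * w^b) ((b:ℂ)^(k+1) * ((b:ℂ) * y^(b-1))) y := by
      intro b y _
      exact (hasDerivAt_pow b y).const_mul _
    have hbound : ∀ (b : ℕ) (y : ℂ), y ∈ t →
        ‖(b:ℂ)^(k+1) * ((b:ℂ) * y^(b-1))‖ ≤ (b:ℝ)^(k+2) * r^(b-1) := by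
      intro b y hy
      have hyr : ‖y‖ ≤ r := le_of_lt (by simpa [ht] using hy)
      have : ‖(b:ℂ)^(k+1) * ((b:ℂ) * y^(b-1))‖ = (b:ℝ)^(k+2) * ‖y‖^(b-1) := by
        simp [norm_mul, norm_pow]
        ring
      rw [this]
      exact mul_le_mul_of_nonneg_left (pow_le_pow_left₀ (norm_nonneg y) hyr _)
        (by positivity)
    have hsum0 : Summable (fun b : ℕ => (b:ℂ)^(k+1) * z^b) := (gg_hasSum k z hz).summable
    have hDA : HasDerivAt (fun y : ℂ => ∑' b : ℕ, (b:ℂ)^(k+1) * y^b)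
        (∑' b : ℕ, (b:ℂ)^(k+1) * ((b:ℂ) * z^(b-1))) z :=
      hasDerivAt_tsum_of_isPreconnected hu Metric.isOpen_ball
        (convex_ball (0:ℂ) r).isPreconnected hderiv hbound hzt hsum0 hzt
    have heq : (gg k) =ᶠ[𝓝 z] (fun y : ℂ => ∑' b : ℕ, (b:ℂ)^(k+1) * y^b) := by
      filter_upwards [Metric.isOpen_ball.mem_nhds hzt] with y hy
      have hy1 : ‖y‖ < 1 := lt_trans (by simpa [ht] using hy) hr1
      exact ((gg_hasSum k y hy1).tsum_eq).symm
    have hDA2 : HasDerivAt (gg k) (∑' b : ℕ, (b:ℂ)^(k+1) * ((b:ℂ) * z^(b-1))) z :=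
      hDA.congr_of_eventuallyEq heq
    have hval : (∑' b : ℕ, (b:ℂ)^(k+1) * ((b:ℂ) * z^(b-1))) = DD k z :=
      hDA2.unique (gg_hasDerivAt k hz1)
    have hsd : Summable (fun b : ℕ => (b:ℂ)^(k+1) * ((b:ℂ) * z^(b-1))) :=
      Summable.of_norm_bounded hu (fun b => hbound b z hzt)
    have hDsum : HasSum (fun b : ℕ => (b:ℂ)^(k+1) * ((b:ℂ) * z^(b-1))) (DD k z) := by
      rw [← hval]; exact hsd.hasSum
    rw [gg_succ k hz1]
    have := hDsum.mul_left z
    refine this.congr_fun fun b => ?_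
    rcases b with _ | b
    · simp
    · have h1 : ((b:ℂ)+1)^(k+1+1) = ((b:ℂ)+1)^(k+1) * ((b:ℂ)+1) := by rw [pow_succ]
      push_cast
      rw [h1, pow_succ]
      ring

lemma gg_sym : ∀ (k : ℕ) (z : ℂ), z ≠ 0 → z ≠ 1 → gg k z⁻¹ = (-1)^k * gg k z
  | 0 => by
    intro z hz0 hz1
    have h1 : (1:ℂ) - z ≠ 0 := sub_ne_zero.mpr (fun h => hz1 h.symm)
    unfold gg
    rw [show BB 0 = X from rfl]
    simp only [eval_X, pow_zero, one_mul]
    have h2 : ((1:ℂ) - z⁻¹) ≠ 0 := by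
      intro h
      have : z⁻¹ = 1 := by linear_combination -h
      exact hz1 (inv_eq_one.mp this)
    rw [div_eq_div_iff (pow_ne_zero 2 h2) (pow_ne_zero 2 h1)]
    field_simp
    ring
  | (k+1) => by
    intro z hz0 hz1
    have h1 : (1:ℂ) - z ≠ 0 := sub_ne_zero.mpr (fun h => hz1 h.symm)
    have hzi0 : z⁻¹ ≠ 0 := inv_ne_zero hz0
    have hzi1 : z⁻¹ ≠ 1 := by
      intro h; apply hz1
      field_simp at h; simp [h]
    -- identity of derivatives on the open set {w | w ≠ 0 ∧ w ≠ 1}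
    have hopen : IsOpen {w : ℂ | w ≠ 0 ∧ w ≠ 1} := by
      have : {w : ℂ | w ≠ 0 ∧ w ≠ 1} = {(0:ℂ)}ᶜ ∩ {(1:ℂ)}ᶜ := by
        ext w; simp [and_comm]
      rw [this]
      exact (isOpen_compl_singleton).inter (isOpen_compl_singleton)
    have hmem : z ∈ {w : ℂ | w ≠ 0 ∧ w ≠ 1} := ⟨hz0, hz1⟩
    have heq : (fun w : ℂ => gg k w⁻¹) =ᶠ[𝓝 z] (fun w : ℂ => (-1)^k * gg k w) := by
      filter_upwards [hopen.mem_nhds hmem] with w hw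
      exact gg_sym k w hw.1 hw.2
    -- derivative of LHS
    have hinv : HasDerivAt (fun w : ℂ => w⁻¹) (-(z^2)⁻¹) z := hasDerivAt_inv hz0
    have hL : HasDerivAt (fun w : ℂ => gg k w⁻¹) (DD k z⁻¹ * (-(z^2)⁻¹)) z :=
      (gg_hasDerivAt k hzi1).comp z hinv
    have hR : HasDerivAt (fun w : ℂ => (-1)^k * gg k w) ((-1:ℂ)^k * DD k z) z :=
      (gg_hasDerivAt k hz1).const_mul _
    have hde : DD k z⁻¹ * (-(z^2)⁻¹) = (-1:ℂ)^k * DD k z := by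
      rw [← hL.deriv, ← hR.deriv]
      exact heq.deriv_eq
    have hDi : DD k z⁻¹ = (-1:ℂ)^(k+1) * z^2 * DD k z := by
      have hz2 : (z^2:ℂ) ≠ 0 := pow_ne_zero _ hz0
      calc DD k z⁻¹ = DD k z⁻¹ * (-(z^2)⁻¹) * (-(z^2)) := by field_simp
        _ = (-1:ℂ)^k * DD k z * (-(z^2)) := by rw [hde]
        _ = (-1:ℂ)^(k+1) * z^2 * DD k z := by rw [pow_succ]; ring
    rw [gg_succ k hzi1, gg_succ k hz1, hDi]
    rw [pow_succ]
    field_simp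

def Good (c : ℕ → ℂ) : Prop :=
  ∃ f : ℂ → ℂ,
    (∃ P R : Polynomial ℂ, R ≠ 0 ∧
      (∀ x : ℂ, R.eval x = 0 → x = 0 ∨ x = 1 ∨ x = -1) ∧
      ∀ z : ℂ, z ≠ 0 → z ≠ 1 → z ≠ -1 → f z = P.eval z / R.eval z) ∧
    (∃ g : ℂ → ℂ, AnalyticAt ℂ g 0 ∧ ∀ᶠ z in 𝓝[≠] (0 : ℂ), g z = z * f z) ∧
    (∀ z : ℂ, 0 < ‖z‖ → ‖z‖ < 1 →
      HasSum (fun b : ℕ => c b * z ^ ((b : ℤ) - 1)) (f z)) ∧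
    (∀ z : ℂ, z ≠ 0 → z ≠ 1 → z ≠ -1 → f z = f z⁻¹ / z ^ 2)

lemma Good_add {c₁ c₂ : ℕ → ℂ} (h₁ : Good c₁) (h₂ : Good c₂) :
    Good (fun b => c₁ b + c₂ b) := by
  obtain ⟨f₁, ⟨P₁, R₁, hR₁, hz₁, he₁⟩, ⟨g₁, hg₁, hev₁⟩, hs₁, ha₁⟩ := h₁
  obtain ⟨f₂, ⟨P₂, R₂, hR₂, hz₂, he₂⟩, ⟨g₂, hg₂, hev₂⟩, hs₂, ha₂⟩ := h₂
  refine ⟨fun z => f₁ z + f₂ z, ⟨P₁ * R₂ + P₂ * R₁, R₁ * R₂, mul_ne_zero hR₁ hR₂, ?_, ?_⟩,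
    ⟨fun z => g₁ z + g₂ z, hg₁.add hg₂, ?_⟩, ?_, ?_⟩
  · intro x hx
    rw [eval_mul, mul_eq_zero] at hx
    rcases hx with h | h
    · exact hz₁ x h
    · exact hz₂ x h
  · intro z h0 h1 hn
    have n₁ : R₁.eval z ≠ 0 := by
      intro h; rcases hz₁ z h with h | h | h
      exacts [h0 h, h1 h, hn h]
    have n₂ : R₂.eval z ≠ 0 := by
      intro h; rcases hz₂ z h with h | h | h
      exacts [h0 h, h1 h, hn h]
    show f₁ z + f₂ z = _
    rw [he₁ z h0 h1 hn, he₂ z h0 h1 hn, div_add_div _ _ n₁ n₂]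
    simp only [eval_add, eval_mul]
    ring_nf
  · filter_upwards [hev₁, hev₂] with z e₁ e₂
    show g₁ z + g₂ z = z * (f₁ z + f₂ z)
    rw [e₁, e₂]; ring
  · intro z h0 h1
    refine ((hs₁ z h0 h1).add (hs₂ z h0 h1)).congr_fun fun b => ?_
    show (c₁ b + c₂ b) * _ = _
    exact add_mul _ _ _
  · intro z h0 h1 hn
    show f₁ z + f₂ z = (f₁ z⁻¹ + f₂ z⁻¹) / z ^ 2
    rw [ha₁ z h0 h1 hn, ha₂ z h0 h1 hn, ← add_div]

lemma Good_delta (γ : ℂ) : Good (fun b => if b = 0 then γ else 0) := by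
  refine ⟨fun z => γ * z⁻¹, ⟨C γ, X, X_ne_zero, ?_, ?_⟩,
    ⟨fun _ => γ, analyticAt_const, ?_⟩, ?_, ?_⟩
  · intro x hx; left; simpa using hx
  · intro z h0 _ _; rw [eval_C, eval_X, div_eq_mul_inv]
  · filter_upwards [self_mem_nhdsWithin] with z hz
    have h0 : z ≠ 0 := hz
    field_simp
  · intro z h0 _
    have : (fun b : ℕ => (if b = 0 then γ else 0) * z ^ ((b : ℤ) - 1))
        = fun b : ℕ => if b = 0 then γ * z⁻¹ else 0 := by
      funext b
      rcases eq_or_ne b 0 with h | h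
      · simp [h, zpow_neg_one]
      · simp [h]
    rw [this]
    exact hasSum_ite_eq 0 _
  · intro z h0 _ _
    show γ * z⁻¹ = γ * z⁻¹⁻¹ / z ^ 2
    rw [inv_inv]
    field_simp


lemma Good_even (a : ℂ) (n : ℕ) :
    Good (fun b => if Even b then (b:ℂ) * (a * ((b:ℂ)^2)^n) else 0) := by
  refine ⟨fun z => a * (2*z)⁻¹ * (gg (2*n) z + gg (2*n) (-z)),
    ⟨C a * (BB (2*n) * (1+X)^(2*n+2) + (BB (2*n)).comp (-X) * (1-X)^(2*n+2)),
     C 2 * (X * ((1-X)^(2*n+2) * (1+X)^(2*n+2))), ?_, ?_, ?_⟩, ?_, ?_, ?_⟩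
  · -- R ≠ 0
    intro h
    have hv := congrArg (Polynomial.eval (2:ℂ)) h
    simp only [eval_mul, eval_pow, eval_add, eval_sub, eval_one, eval_X, eval_C,
      eval_zero] at hv
    have h3 : ((1:ℂ)-2) ≠ 0 := by norm_num
    have h4 : ((1:ℂ)+2) ≠ 0 := by norm_num
    simp [pow_ne_zero, h3, h4] at hv
  · -- zeros of R
    intro x hx
    simp only [eval_mul, eval_C, eval_X, eval_pow, eval_sub, eval_add, eval_one] at hx
    rcases mul_eq_zero.mp hx with h | h
    · exact absurd h two_ne_zero
    rcases mul_eq_zero.mp h with h | h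
    · exact Or.inl h
    rcases mul_eq_zero.mp h with h | h
    · have h5 := pow_eq_zero_iff (n := 2*n+2) (by omega) |>.mp h
      exact Or.inr (Or.inl (by linear_combination -h5))
    · have h5 := pow_eq_zero_iff (n := 2*n+2) (by omega) |>.mp h
      exact Or.inr (Or.inr (by linear_combination h5))
  · -- rational form
    intro z h0 h1 hn
    have hs1 : (1:ℂ) - z ≠ 0 := sub_ne_zero.mpr (fun h => h1 h.symm)
    have hs2 : (1:ℂ) + z ≠ 0 := fun h => hn (by linear_combination h)
    show a * (2*z)⁻¹ * (gg (2*n) z + gg (2*n) (-z)) = _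
    unfold gg
    rw [sub_neg_eq_add]
    simp only [eval_mul, eval_add, eval_sub, eval_pow, eval_one, eval_X, eval_C,
      eval_comp, eval_neg]
    have hU : ((1:ℂ)-z)^(2*n+2) ≠ 0 := pow_ne_zero _ hs1
    have hV : ((1:ℂ)+z)^(2*n+2) ≠ 0 := pow_ne_zero _ hs2
    generalize hu' : ((1:ℂ)-z)^(2*n+2) = u at hU ⊢
    generalize hv' : ((1:ℂ)+z)^(2*n+2) = v at hV ⊢
    field_simp
    try tauto
  · -- analytic extension at 0
    refine ⟨fun z => (C a * (BB (2*n) * (1+X)^(2*n+2) + (BB (2*n)).comp (-X)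
        * (1-X)^(2*n+2))).eval z
        / ((C (2:ℂ) * ((1-X)^(2*n+2) * (1+X)^(2*n+2))).eval z), ?_, ?_⟩
    · refine AnalyticAt.div ((Polynomial.differentiable _).analyticAt 0)
        ((Polynomial.differentiable _).analyticAt 0) ?_
      simp
    · filter_upwards [self_mem_nhdsWithin,
        eventually_ne_nhdsWithin (show (0:ℂ) ≠ 1 by norm_num),
        eventually_ne_nhdsWithin (show (0:ℂ) ≠ -1 by norm_num)] with z hz h1 hn
      have h0 : z ≠ 0 := hz
      have hs1 : (1:ℂ) - z ≠ 0 := sub_ne_zero.mpr (fun h => h1 h.symm)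
      have hs2 : (1:ℂ) + z ≠ 0 := fun h => hn (by linear_combination h)
      show _ = z * (a * (2*z)⁻¹ * (gg (2*n) z + gg (2*n) (-z)))
      unfold gg
      rw [sub_neg_eq_add]
      simp only [eval_mul, eval_add, eval_sub, eval_pow, eval_one, eval_X, eval_C,
        eval_comp, eval_neg]
      have hU : ((1:ℂ)-z)^(2*n+2) ≠ 0 := pow_ne_zero _ hs1
      have hV : ((1:ℂ)+z)^(2*n+2) ≠ 0 := pow_ne_zero _ hs2
      generalize hu' : ((1:ℂ)-z)^(2*n+2) = u at hU ⊢
      generalize hv' : ((1:ℂ)+z)^(2*n+2) = v at hV ⊢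
      field_simp
      try tauto
  · -- the sum
    intro z h0 h1
    have hz0 : z ≠ 0 := by intro h; rw [h] at h0; simp at h0
    have hs1 := gg_hasSum (2*n) z h1
    have hs2 := gg_hasSum (2*n) (-z) (by rwa [norm_neg])
    refine ((hs1.add hs2).mul_left (a * (2*z)⁻¹)).congr_fun fun b => ?_
    have hzp : z ^ ((b:ℤ) - 1) = z ^ b * z⁻¹ := by
      rw [zpow_sub₀ hz0, zpow_one, zpow_natCast, div_eq_mul_inv]
    show (if Even b then (b:ℂ) * (a * ((b:ℂ)^2)^n) else 0) * z ^ ((b:ℤ) - 1) = _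
    by_cases hb : Even b
    · rw [if_pos hb, hb.neg_pow, hzp, (pow_mul (b:ℂ) 2 n).symm, pow_succ]
      field_simp
      ring
    · rw [if_neg hb, (Nat.not_even_iff_odd.mp hb).neg_pow]
      ring
  · -- antisymmetry
    intro z h0 h1 hn
    have hneg0 : -z ≠ 0 := neg_ne_zero.mpr h0
    have hneg1 : -z ≠ 1 := fun h => hn (by linear_combination -h)
    have e1 : gg (2*n) z⁻¹ = (-1)^(2*n) * gg (2*n) z := gg_sym (2*n) z h0 h1
    have e2 : gg (2*n) (-z)⁻¹ = (-1)^(2*n) * gg (2*n) (-z) := gg_sym (2*n) (-z) hneg0 hneg1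
    have hsgn : ((-1:ℂ))^(2*n) = 1 := by rw [pow_mul]; norm_num
    show a * (2*z)⁻¹ * (gg (2*n) z + gg (2*n) (-z))
      = a * (2*z⁻¹)⁻¹ * (gg (2*n) z⁻¹ + gg (2*n) (-z⁻¹)) / z^2
    rw [show -z⁻¹ = (-z)⁻¹ by rw [inv_neg], e1, e2, hsgn, one_mul, one_mul]
    field_simp

lemma Good_odd (a : ℂ) (n : ℕ) :
    Good (fun b => if Even b then 0 else (b:ℂ) * (a * ((b:ℂ)^2)^n)) := by
  refine ⟨fun z => a * (2*z)⁻¹ * (gg (2*n) z - gg (2*n) (-z)),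
    ⟨C a * (BB (2*n) * (1+X)^(2*n+2) - (BB (2*n)).comp (-X) * (1-X)^(2*n+2)),
     C 2 * (X * ((1-X)^(2*n+2) * (1+X)^(2*n+2))), ?_, ?_, ?_⟩, ?_, ?_, ?_⟩
  · -- R ≠ 0
    intro h
    have hv := congrArg (Polynomial.eval (2:ℂ)) h
    simp only [eval_mul, eval_pow, eval_add, eval_sub, eval_one, eval_X, eval_C,
      eval_zero] at hv
    have h3 : ((1:ℂ)-2) ≠ 0 := by norm_num
    have h4 : ((1:ℂ)+2) ≠ 0 := by norm_num
    simp [pow_ne_zero, h3, h4] at hv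
  · -- zeros of R
    intro x hx
    simp only [eval_mul, eval_C, eval_X, eval_pow, eval_sub, eval_add, eval_one] at hx
    rcases mul_eq_zero.mp hx with h | h
    · exact absurd h two_ne_zero
    rcases mul_eq_zero.mp h with h | h
    · exact Or.inl h
    rcases mul_eq_zero.mp h with h | h
    · have h5 := pow_eq_zero_iff (n := 2*n+2) (by omega) |>.mp h
      exact Or.inr (Or.inl (by linear_combination -h5))
    · have h5 := pow_eq_zero_iff (n := 2*n+2) (by omega) |>.mp h
      exact Or.inr (Or.inr (by linear_combination h5))
  · -- rational form
    intro z h0 h1 hn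
    have hs1 : (1:ℂ) - z ≠ 0 := sub_ne_zero.mpr (fun h => h1 h.symm)
    have hs2 : (1:ℂ) + z ≠ 0 := fun h => hn (by linear_combination h)
    show a * (2*z)⁻¹ * (gg (2*n) z - gg (2*n) (-z)) = _
    unfold gg
    rw [sub_neg_eq_add]
    simp only [eval_mul, eval_add, eval_sub, eval_pow, eval_one, eval_X, eval_C,
      eval_comp, eval_neg]
    have hU : ((1:ℂ)-z)^(2*n+2) ≠ 0 := pow_ne_zero _ hs1
    have hV : ((1:ℂ)+z)^(2*n+2) ≠ 0 := pow_ne_zero _ hs2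
    generalize hu' : ((1:ℂ)-z)^(2*n+2) = u at hU ⊢
    generalize hv' : ((1:ℂ)+z)^(2*n+2) = v at hV ⊢
    field_simp
    try tauto
  · -- analytic extension at 0
    refine ⟨fun z => (C a * (BB (2*n) * (1+X)^(2*n+2) - (BB (2*n)).comp (-X)
        * (1-X)^(2*n+2))).eval z
        / ((C (2:ℂ) * ((1-X)^(2*n+2) * (1+X)^(2*n+2))).eval z), ?_, ?_⟩
    · refine AnalyticAt.div ((Polynomial.differentiable _).analyticAt 0)
        ((Polynomial.differentiable _).analyticAt 0) ?_
      simp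
    · filter_upwards [self_mem_nhdsWithin,
        eventually_ne_nhdsWithin (show (0:ℂ) ≠ 1 by norm_num),
        eventually_ne_nhdsWithin (show (0:ℂ) ≠ -1 by norm_num)] with z hz h1 hn
      have h0 : z ≠ 0 := hz
      have hs1 : (1:ℂ) - z ≠ 0 := sub_ne_zero.mpr (fun h => h1 h.symm)
      have hs2 : (1:ℂ) + z ≠ 0 := fun h => hn (by linear_combination h)
      show _ = z * (a * (2*z)⁻¹ * (gg (2*n) z - gg (2*n) (-z)))
      unfold gg
      rw [sub_neg_eq_add]
      simp only [eval_mul, eval_add, eval_sub, eval_pow, eval_one, eval_X, eval_C,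
        eval_comp, eval_neg]
      have hU : ((1:ℂ)-z)^(2*n+2) ≠ 0 := pow_ne_zero _ hs1
      have hV : ((1:ℂ)+z)^(2*n+2) ≠ 0 := pow_ne_zero _ hs2
      generalize hu' : ((1:ℂ)-z)^(2*n+2) = u at hU ⊢
      generalize hv' : ((1:ℂ)+z)^(2*n+2) = v at hV ⊢
      field_simp
      try tauto
  · -- the sum
    intro z h0 h1
    have hz0 : z ≠ 0 := by intro h; rw [h] at h0; simp at h0
    have hs1 := gg_hasSum (2*n) z h1
    have hs2 := gg_hasSum (2*n) (-z) (by rwa [norm_neg])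
    refine ((hs1.sub hs2).mul_left (a * (2*z)⁻¹)).congr_fun fun b => ?_
    have hzp : z ^ ((b:ℤ) - 1) = z ^ b * z⁻¹ := by
      rw [zpow_sub₀ hz0, zpow_one, zpow_natCast, div_eq_mul_inv]
    show (if Even b then 0 else (b:ℂ) * (a * ((b:ℂ)^2)^n)) * z ^ ((b:ℤ) - 1) = _
    by_cases hb : Even b
    · rw [if_pos hb, hb.neg_pow]
      ring
    · rw [if_neg hb, (Nat.not_even_iff_odd.mp hb).neg_pow, hzp,
        (pow_mul (b:ℂ) 2 n).symm, pow_succ]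
      field_simp
      ring
  · -- antisymmetry
    intro z h0 h1 hn
    have hneg0 : -z ≠ 0 := neg_ne_zero.mpr h0
    have hneg1 : -z ≠ 1 := fun h => hn (by linear_combination -h)
    have e1 : gg (2*n) z⁻¹ = (-1)^(2*n) * gg (2*n) z := gg_sym (2*n) z h0 h1
    have e2 : gg (2*n) (-z)⁻¹ = (-1)^(2*n) * gg (2*n) (-z) := gg_sym (2*n) (-z) hneg0 hneg1
    have hsgn : ((-1:ℂ))^(2*n) = 1 := by rw [pow_mul]; norm_num
    show a * (2*z)⁻¹ * (gg (2*n) z - gg (2*n) (-z))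
      = a * (2*z⁻¹)⁻¹ * (gg (2*n) z⁻¹ - gg (2*n) (-z⁻¹)) / z^2
    rw [show -z⁻¹ = (-z)⁻¹ by rw [inv_neg], e1, e2, hsgn, one_mul, one_mul]
    field_simp

lemma Good_congr {c₁ c₂ : ℕ → ℂ} (h : ∀ b, c₁ b = c₂ b) (hg : Good c₁) : Good c₂ := by
  obtain ⟨f, h1, h2, h3, h4⟩ := hg
  exact ⟨f, h1, h2,
    fun z hz1 hz2 => (h3 z hz1 hz2).congr_fun (fun b => by rw [← h b]), h4⟩

lemma Good_evenPoly (p : Polynomial ℂ) :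
    Good (fun b => if Even b then (b:ℂ) * p.eval ((b:ℂ)^2) else 0) := by
  induction p using Polynomial.induction_on' with
  | add p q hp hq =>
    refine Good_congr (fun b => ?_) (Good_add hp hq)
    by_cases hb : Even b <;> simp [hb, eval_add] <;> ring
  | monomial m a =>
    refine Good_congr (fun b => ?_) (Good_even a m)
    by_cases hb : Even b <;> simp [hb, eval_monomial]

lemma Good_oddPoly (p : Polynomial ℂ) :
    Good (fun b => if Even b then 0 else (b:ℂ) * p.eval ((b:ℂ)^2)) := by
  induction p using Polynomial.induction_on' with
  | add p q hp hq =>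
    refine Good_congr (fun b => ?_) (Good_add hp hq)
    by_cases hb : Even b <;> simp [hb, eval_add] <;> ring
  | monomial m a =>
    refine Good_congr (fun b => ?_) (Good_odd a m)
    by_cases hb : Even b <;> simp [hb, eval_monomial]

/-- Every element of the space `V(z)` of generating functions
`∑_b [b]·Q(b)·z^{b-1}` with `Q` a quasi-polynomial in `b²` extends to a rational
function with poles only at `z = 0, 1, -1`, at most a simple pole at `0`, and
satisfying the antisymmetry `f(z) = f(1/z)/z²`. -/
theorem V_structure (Pe Po : Polynomial ℂ) :
    ∃ f : ℂ → ℂ,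
      -- (i) f is rational with poles only at 0, 1, -1
      (∃ P R : Polynomial ℂ, R ≠ 0 ∧
        (∀ x : ℂ, R.eval x = 0 → x = 0 ∨ x = 1 ∨ x = -1) ∧
        ∀ z : ℂ, z ≠ 0 → z ≠ 1 → z ≠ -1 → f z = P.eval z / R.eval z) ∧
      -- (ii) at most a simple pole at 0: z·f(z) extends holomorphically near 0
      (∃ g : ℂ → ℂ, AnalyticAt ℂ g 0 ∧ ∀ᶠ z in 𝓝[≠] (0 : ℂ), g z = z * f z) ∧
      -- (iii) f sums the series on the punctured unit disc
      (∀ z : ℂ, 0 < ‖z‖ → ‖z‖ < 1 →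
        HasSum
          (fun b : ℕ => (br b : ℂ) *
            (if Even b then Pe.eval ((b : ℂ) ^ 2) else Po.eval ((b : ℂ) ^ 2)) *
            z ^ ((b : ℤ) - 1)) (f z)) ∧
      -- (iv) antisymmetry
      (∀ z : ℂ, z ≠ 0 → z ≠ 1 → z ≠ -1 → f z = f z⁻¹ / z ^ 2) := by
  have key : Good (fun b => (br b : ℂ) *
      (if Even b then Pe.eval ((b:ℂ)^2) else Po.eval ((b:ℂ)^2))) := by
    refine Good_congr (fun b => ?_)
      (Good_add (Good_add (Good_delta (Pe.eval 0)) (Good_evenPoly Pe)) (Good_oddPoly Po))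
    show ((if b = 0 then Pe.eval 0 else 0) + (if Even b then (b:ℂ) * Pe.eval ((b:ℂ)^2) else 0))
        + (if Even b then 0 else (b:ℂ) * Po.eval ((b:ℂ)^2)) = _
    rcases eq_or_ne b 0 with hb | hb
    · subst hb
      norm_num [br]
    · rw [show br b = b from if_neg hb]
      by_cases he : Even b <;> simp [he, hb]
  obtain ⟨f, h1, h2, h3, h4⟩ := key
  exact ⟨f, h1, h2, h3, h4⟩
end

section
/- For k ∈ ℕ let ξᵉₖ : ℂ∖{0,1,−1} → ℂ be defined by ξᵉₖ(z) = deriv((z·d/dz)^{2k} φ)(z) + (1/z if k = 0, else 0), where φ(w) = w²/(1−w²). Then for every ε with 0 < ε < 1: (1/(2πi))·( ∮_{C(1,ε)} ξᵉₖ(z)·Log z dz + ∮_{C(−1,ε)} ξᵉₖ(z)·(Log(−z) + πi) dz ) = 1 if k = 0 and = 0 if k ≥ 1. -/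
open Complex Metric

lemma one_sub_sq_ne {z : ℂ} (h1 : z ≠ 1) (h2 : z ≠ -1) : 1 - z ^ 2 ≠ 0 := by
  intro h
  have h' : (1 - z) * (1 + z) = 0 := by linear_combination h
  rcases mul_eq_zero.1 h' with h'' | h''
  · exact h1 (by linear_combination -h'')
  · exact h2 (by linear_combination h'')

lemma isOpen_Uc : IsOpen ({1, -1}ᶜ : Set ℂ) :=
  ({1, -1} : Set ℂ).toFinite.isClosed.isOpen_compl

lemma mem_Uc {z : ℂ} (h1 : z ≠ 1) (h2 : z ≠ -1) : z ∈ ({1, -1}ᶜ : Set ℂ) := by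
  simp [h1, h2]

lemma analytic_iter (n : ℕ) :
    AnalyticOnNhd ℂ (eulerOp^[n] phiFn) ({1, -1}ᶜ : Set ℂ) := by
  induction n with
  | zero =>
    simp only [Function.iterate_zero, id]
    refine DifferentiableOn.analyticOnNhd ?_ isOpen_Uc
    intro z hz
    simp only [Set.mem_compl_iff, Set.mem_insert_iff, Set.mem_singleton_iff, not_or] at hz
    exact (((differentiableAt_id.pow 2).div
      ((differentiableAt_const (1:ℂ)).sub (differentiableAt_id.pow 2))
      (by simpa using one_sub_sq_ne hz.1 hz.2))).differentiableWithinAt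
  | succ n ih =>
    rw [Function.iterate_succ_apply']
    exact analyticOnNhd_id.mul (ih.deriv_of_isOpen isOpen_Uc)

lemma hasDerivAt_iter (n : ℕ) {z : ℂ} (h1 : z ≠ 1) (h2 : z ≠ -1) :
    HasDerivAt (eulerOp^[n] phiFn) (deriv (eulerOp^[n] phiFn) z) z :=
  ((analytic_iter n z (mem_Uc h1 h2)).differentiableAt).hasDerivAt

lemma continuousOn_deriv_iter (n : ℕ) :
    ContinuousOn (deriv (eulerOp^[n] phiFn)) ({1, -1}ᶜ : Set ℂ) :=
  ((analytic_iter n).deriv_of_isOpen isOpen_Uc).differentiableOn.continuousOn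

lemma sphere_facts_one {ε : ℝ} (hε0 : 0 < ε) (hε1 : ε < 1) {z : ℂ}
    (hz : z ∈ sphere (1 : ℂ) ε) :
    z ≠ 1 ∧ z ≠ -1 ∧ z ≠ 0 ∧ 0 < z.re := by
  rw [mem_sphere_iff_norm] at hz
  have hre : |z.re - 1| ≤ ε := by
    calc |z.re - 1| = |(z - 1).re| := by simp
      _ ≤ ‖z - 1‖ := Complex.abs_re_le_norm _
      _ = ε := by rw [hz]
  refine ⟨?_, ?_, ?_, ?_⟩
  · rintro rfl; simp at hz; linarith
  · rintro rfl
    have : ‖(-1 : ℂ) - 1‖ = 2 := by norm_num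
    rw [this] at hz; linarith
  · rintro rfl
    have : ‖(0 : ℂ) - 1‖ = 1 := by norm_num
    rw [this] at hz; linarith
  · have := abs_le.1 hre; linarith [this.1]

lemma sphere_facts_negone {ε : ℝ} (hε0 : 0 < ε) (hε1 : ε < 1) {z : ℂ}
    (hz : z ∈ sphere (-1 : ℂ) ε) :
    z ≠ 1 ∧ z ≠ -1 ∧ z ≠ 0 ∧ z.re < 0 := by
  rw [mem_sphere_iff_norm] at hz
  have hre : |z.re + 1| ≤ ε := by
    calc |z.re + 1| = |(z - (-1)).re| := by simp
      _ ≤ ‖z - (-1)‖ := Complex.abs_re_le_norm _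
      _ = ε := by rw [hz]
  refine ⟨?_, ?_, ?_, ?_⟩
  · rintro rfl
    have : ‖(1 : ℂ) - (-1)‖ = 2 := by norm_num
    rw [this] at hz; linarith
  · rintro rfl; simp at hz; linarith
  · rintro rfl
    have : ‖(0 : ℂ) - (-1)‖ = 1 := by norm_num
    rw [this] at hz; linarith
  · have := abs_le.1 hre; linarith [this.2]

lemma continuousAt_deriv_iter (n : ℕ) {z : ℂ} (h1 : z ≠ 1) (h2 : z ≠ -1) :
    ContinuousAt (deriv (eulerOp^[n] phiFn)) z :=
  (continuousOn_deriv_iter n).continuousAt (isOpen_Uc.mem_nhds (mem_Uc h1 h2))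

lemma circ_one_pos (k : ℕ) (hk : k ≠ 0) {ε : ℝ} (hε0 : 0 < ε) (hε1 : ε < 1) :
    (∮ z in C(1, ε), xiEven k z * Complex.log z) = 0 := by
  apply circleIntegral.integral_eq_zero_of_hasDerivWithinAt hε0.le
    (f := fun z => eulerOp^[2*k] phiFn z * Complex.log z - eulerOp^[2*k-1] phiFn z)
  intro z hz
  obtain ⟨h1, h2, h0, hre⟩ := sphere_facts_one hε0 hε1 hz
  have hslit : z ∈ Complex.slitPlane := Complex.mem_slitPlane_iff.2 (Or.inl hre)
  have hF := hasDerivAt_iter (2*k) h1 h2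
  have hG := hasDerivAt_iter (2*k-1) h1 h2
  have hiter : eulerOp^[2*k] phiFn z = z * deriv (eulerOp^[2*k-1] phiFn) z := by
    conv_lhs => rw [show 2*k = (2*k-1)+1 by omega, Function.iterate_succ_apply']
    rfl
  have hD := (hF.mul (Complex.hasDerivAt_log hslit)).sub hG
  have heq : deriv (eulerOp^[2*k] phiFn) z * Complex.log z + eulerOp^[2*k] phiFn z * z⁻¹
        - deriv (eulerOp^[2*k-1] phiFn) z = xiEven k z * Complex.log z := by
    simp only [xiEven, if_neg hk, add_zero, hiter]
    field_simp
    ring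
  exact (heq ▸ hD).hasDerivWithinAt

lemma circ_negone_pos (k : ℕ) (hk : k ≠ 0) {ε : ℝ} (hε0 : 0 < ε) (hε1 : ε < 1) :
    (∮ z in C(-1, ε), xiEven k z * (Complex.log (-z) + Real.pi * Complex.I)) = 0 := by
  apply circleIntegral.integral_eq_zero_of_hasDerivWithinAt hε0.le
    (f := fun z => eulerOp^[2*k] phiFn z * (Complex.log (-z) + Real.pi * Complex.I)
      - eulerOp^[2*k-1] phiFn z)
  intro z hz
  obtain ⟨h1, h2, h0, hre⟩ := sphere_facts_negone hε0 hε1 hz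
  have hslit : -z ∈ Complex.slitPlane := Complex.mem_slitPlane_iff.2 (Or.inl (by simp; linarith))
  have hF := hasDerivAt_iter (2*k) h1 h2
  have hG := hasDerivAt_iter (2*k-1) h1 h2
  have hiter : eulerOp^[2*k] phiFn z = z * deriv (eulerOp^[2*k-1] phiFn) z := by
    conv_lhs => rw [show 2*k = (2*k-1)+1 by omega, Function.iterate_succ_apply']
    rfl
  have hL : HasDerivAt (fun w : ℂ => Complex.log (-w) + Real.pi * Complex.I) z⁻¹ z := by
    have hneg : HasDerivAt (fun w : ℂ => -w) (-1) z := (hasDerivAt_id z).neg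
    have := ((Complex.hasDerivAt_log hslit).comp z hneg).add_const (Real.pi * Complex.I)
    simpa [inv_neg] using this
  have hD := (hF.mul hL).sub hG
  have heq : deriv (eulerOp^[2*k] phiFn) z * (Complex.log (-z) + Real.pi * Complex.I)
        + eulerOp^[2*k] phiFn z * z⁻¹ - deriv (eulerOp^[2*k-1] phiFn) z
        = xiEven k z * (Complex.log (-z) + Real.pi * Complex.I) := by
    simp only [xiEven, if_neg hk, add_zero, hiter]
    field_simp
    ring
  exact (heq ▸ hD).hasDerivWithinAt

lemma circ_one_zero {ε : ℝ} (hε0 : 0 < ε) (hε1 : ε < 1) :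
    (∮ z in C(1, ε), xiEven 0 z * Complex.log z) = Real.pi * Complex.I := by
  have key : (∮ z in C(1, ε),
      (xiEven 0 z * Complex.log z - 2⁻¹ * (z - 1)⁻¹)) = 0 := by
    apply circleIntegral.integral_eq_zero_of_hasDerivWithinAt hε0.le
      (f := fun z => phiFn z * Complex.log z + (Complex.log z)^2/2
        + 2⁻¹ * Complex.log (z + 1))
    intro z hz
    obtain ⟨h1, h2, h0, hre⟩ := sphere_facts_one hε0 hε1 hz
    have hz1 : z - 1 ≠ 0 := sub_ne_zero.2 h1
    have hz2 : z + 1 ≠ 0 := fun h => h2 (by linear_combination h)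
    have hslit : z ∈ Complex.slitPlane := Complex.mem_slitPlane_iff.2 (Or.inl hre)
    have hslit2 : z + 1 ∈ Complex.slitPlane :=
      Complex.mem_slitPlane_iff.2 (Or.inl (by simp; linarith))
    have hphi : HasDerivAt phiFn (deriv (eulerOp^[0] phiFn) z) z := by
      simpa using hasDerivAt_iter 0 h1 h2
    have hlog := Complex.hasDerivAt_log hslit
    have hsq : HasDerivAt (fun z => (Complex.log z)^2/2)
        ((2 * Complex.log z ^ 1 * z⁻¹)/2) z := (hlog.pow 2).div_const 2
    have hlog2 : HasDerivAt (fun z => 2⁻¹ * Complex.log (z + 1)) (2⁻¹ * ((z+1)⁻¹ * 1)) z :=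
      ((Complex.hasDerivAt_log hslit2).comp z ((hasDerivAt_id z).add_const 1)).const_mul _
    have hD := ((hphi.mul hlog).add hsq).add hlog2
    have heq : deriv (eulerOp^[0] phiFn) z * Complex.log z + phiFn z * z⁻¹
        + (2 * Complex.log z ^ 1 * z⁻¹)/2 + 2⁻¹ * ((z+1)⁻¹ * 1)
        = xiEven 0 z * Complex.log z - 2⁻¹ * (z - 1)⁻¹ := by
      simp only [xiEven, if_pos, Nat.mul_zero, phiFn]
      have hs := one_sub_sq_ne h1 h2
      field_simp
      ring
    exact (heq ▸ hD).hasDerivWithinAt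
  have hint1 : CircleIntegrable (fun z => xiEven 0 z * Complex.log z) 1 ε := by
    refine ContinuousOn.circleIntegrable hε0.le ?_
    intro z hz
    obtain ⟨h1, h2, h0, hre⟩ := sphere_facts_one hε0 hε1 hz
    have hslit : z ∈ Complex.slitPlane := Complex.mem_slitPlane_iff.2 (Or.inl hre)
    have hxi : ContinuousAt (xiEven 0) z := by
      exact (continuousAt_deriv_iter (2*0) h1 h2).add
        (continuousAt_const.div continuousAt_id h0)
    exact (hxi.mul (continuousAt_clog hslit)).continuousWithinAt
  have hint2 : CircleIntegrable (fun z : ℂ => (2⁻¹ : ℂ) * (z - 1)⁻¹) 1 ε := by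
    refine ContinuousOn.circleIntegrable hε0.le ?_
    intro z hz
    obtain ⟨h1, h2, h0, hre⟩ := sphere_facts_one hε0 hε1 hz
    exact (continuousAt_const.mul
      ((continuousAt_id.sub continuousAt_const).inv₀ (sub_ne_zero.2 h1))).continuousWithinAt
  have hsub := circleIntegral.integral_sub hint1 hint2
  rw [key] at hsub
  have hval : (∮ z in C(1, ε), (2⁻¹ : ℂ) * (z - 1)⁻¹) = Real.pi * Complex.I := by
    have : (∮ z in C(1, ε), (2⁻¹ : ℂ) • (z - 1)⁻¹)
        = (2⁻¹ : ℂ) • (∮ z in C(1, ε), (z - 1)⁻¹) := circleIntegral.integral_smul _ _ _ _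
    simp only [smul_eq_mul] at this
    rw [this, circleIntegral.integral_sub_inv_of_mem_ball (mem_ball_self hε0)]
    ring
  linear_combination -hsub + hval

lemma circ_negone_zero {ε : ℝ} (hε0 : 0 < ε) (hε1 : ε < 1) :
    (∮ z in C(-1, ε), xiEven 0 z * (Complex.log (-z) + Real.pi * Complex.I))
      = Real.pi * Complex.I := by
  have key : (∮ z in C(-1, ε),
      (xiEven 0 z * (Complex.log (-z) + Real.pi * Complex.I) - 2⁻¹ * (z + 1)⁻¹)) = 0 := by
    apply circleIntegral.integral_eq_zero_of_hasDerivWithinAt hε0.le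
      (f := fun z => phiFn z * (Complex.log (-z) + Real.pi * Complex.I)
        + (Complex.log (-z) + Real.pi * Complex.I)^2/2 + 2⁻¹ * Complex.log (1 - z))
    intro z hz
    obtain ⟨h1, h2, h0, hre⟩ := sphere_facts_negone hε0 hε1 hz
    have hz1 : z - 1 ≠ 0 := sub_ne_zero.2 h1
    have hz2 : z + 1 ≠ 0 := fun h => h2 (by linear_combination h)
    have hslit : -z ∈ Complex.slitPlane := Complex.mem_slitPlane_iff.2 (Or.inl (by simp; linarith))
    have hslit2 : 1 - z ∈ Complex.slitPlane :=
      Complex.mem_slitPlane_iff.2 (Or.inl (by simp; linarith))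
    have hphi : HasDerivAt phiFn (deriv (eulerOp^[0] phiFn) z) z := by
      simpa using hasDerivAt_iter 0 h1 h2
    have hL : HasDerivAt (fun w : ℂ => Complex.log (-w) + Real.pi * Complex.I) z⁻¹ z := by
      have hneg : HasDerivAt (fun w : ℂ => -w) (-1) z := (hasDerivAt_id z).neg
      have := ((Complex.hasDerivAt_log hslit).comp z hneg).add_const (Real.pi * Complex.I)
      simpa [inv_neg] using this
    have hsq : HasDerivAt (fun z => (Complex.log (-z) + Real.pi * Complex.I)^2/2)
        ((2 * (Complex.log (-z) + Real.pi * Complex.I) ^ 1 * z⁻¹)/2) z := (hL.pow 2).div_const 2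
    have hlog2 : HasDerivAt (fun z : ℂ => 2⁻¹ * Complex.log (1 - z))
        (2⁻¹ * ((1 - z)⁻¹ * (-1))) z := by
      have hsub : HasDerivAt (fun w : ℂ => 1 - w) (-1) z := by
        simpa using (hasDerivAt_id z).const_sub (1:ℂ)
      exact ((Complex.hasDerivAt_log hslit2).comp z hsub).const_mul _
    have hD := ((hphi.mul hL).add hsq).add hlog2
    have heq : deriv (eulerOp^[0] phiFn) z * (Complex.log (-z) + Real.pi * Complex.I)
        + phiFn z * z⁻¹
        + (2 * (Complex.log (-z) + Real.pi * Complex.I) ^ 1 * z⁻¹)/2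
        + 2⁻¹ * ((1 - z)⁻¹ * (-1))
        = xiEven 0 z * (Complex.log (-z) + Real.pi * Complex.I) - 2⁻¹ * (z + 1)⁻¹ := by
      simp only [xiEven, if_pos, Nat.mul_zero, phiFn]
      have hs := one_sub_sq_ne h1 h2
      have hz1' : (1 : ℂ) - z ≠ 0 := fun h => h1 (by linear_combination -h)
      field_simp
      ring
    exact (heq ▸ hD).hasDerivWithinAt
  have hint1 : CircleIntegrable
      (fun z => xiEven 0 z * (Complex.log (-z) + Real.pi * Complex.I)) (-1) ε := by
    refine ContinuousOn.circleIntegrable hε0.le ?_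
    intro z hz
    obtain ⟨h1, h2, h0, hre⟩ := sphere_facts_negone hε0 hε1 hz
    have hslit : -z ∈ Complex.slitPlane := Complex.mem_slitPlane_iff.2 (Or.inl (by simp; linarith))
    have hxi : ContinuousAt (xiEven 0) z := by
      exact (continuousAt_deriv_iter (2*0) h1 h2).add
        (continuousAt_const.div continuousAt_id h0)
    exact (hxi.mul (((continuousAt_clog hslit).comp continuousAt_neg).add
      continuousAt_const)).continuousWithinAt
  have hint2 : CircleIntegrable (fun z : ℂ => (2⁻¹ : ℂ) * (z + 1)⁻¹) (-1) ε := by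
    refine ContinuousOn.circleIntegrable hε0.le ?_
    intro z hz
    obtain ⟨h1, h2, h0, hre⟩ := sphere_facts_negone hε0 hε1 hz
    have hz2 : z + 1 ≠ 0 := fun h => h2 (by linear_combination h)
    exact (continuousAt_const.mul
      ((continuousAt_id.add continuousAt_const).inv₀ hz2)).continuousWithinAt
  have hsub := circleIntegral.integral_sub hint1 hint2
  rw [key] at hsub
  have hval : (∮ z in C(-1, ε), (2⁻¹ : ℂ) * (z + 1)⁻¹) = Real.pi * Complex.I := by
    have h1 : (∮ z in C(-1, ε), (2⁻¹ : ℂ) • (z + 1)⁻¹)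
        = (2⁻¹ : ℂ) • (∮ z in C(-1, ε), (z + 1)⁻¹) := circleIntegral.integral_smul _ _ _ _
    simp only [smul_eq_mul] at h1
    have h2 : (∮ z in C(-1, ε), (z + 1)⁻¹) = 2 * Real.pi * Complex.I := by
      have := circleIntegral.integral_sub_inv_of_mem_ball (mem_ball_self hε0 (x := (-1 : ℂ)))
      simpa [sub_neg_eq_add] using this
    rw [h1, h2]; ring
  linear_combination -hsub + hval

/-- The sum of the residues of `ξᵉₖ(z)·log z` at `z = ±1` equals the residue of
`ξᵉₖ` at `z = 0`, namely `δ_{k,0}`; residues are expressed as circle integrals. -/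
theorem residue_log_even (k : ℕ) (ε : ℝ) (hε0 : 0 < ε) (hε1 : ε < 1) :
    (1 / (2 * Real.pi * Complex.I)) *
      ((∮ z in C(1, ε), xiEven k z * Complex.log z) +
        (∮ z in C(-1, ε), xiEven k z * (Complex.log (-z) + Real.pi * Complex.I))) =
      if k = 0 then 1 else 0 := by
  rcases eq_or_ne k 0 with rfl | hk
  · rw [circ_one_zero hε0 hε1, circ_negone_zero hε0 hε1, if_pos rfl]
    have hπ : (Real.pi : ℂ) ≠ 0 := by
      exact_mod_cast Real.pi_ne_zero
    field_simp
    ring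
  · rw [circ_one_pos k hk hε0 hε1, circ_negone_pos k hk hε0 hε1, if_neg hk]
    simp
end

section
/- For k ∈ ℕ let ξᵒₖ : ℂ∖{0,1,−1} → ℂ be defined by ξᵒₖ(z) = deriv((z·d/dz)^{2k} ψ)(z), where ψ(w) = w/(1−w²). Then for every ε with 0 < ε < 1: (1/(2πi))·( ∮_{C(1,ε)} ξᵒₖ(z)·Log z dz + ∮_{C(−1,ε)} ξᵒₖ(z)·(Log(−z) + πi) dz ) = 0. -/
open Complex

open Metric Set

/-- Negation substitution for circle integrals. -/
lemma circleIntegral_neg_center (f : ℂ → ℂ) (c : ℂ) (R : ℝ) :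
    (∮ z in C(-c, R), f z) = -∮ z in C(c, R), f (-z) := by
  have key : ∀ θ : ℝ, circleMap (-c) R θ = -(circleMap c R (θ + Real.pi)) := by
    intro θ
    simp only [circleMap]
    have : Complex.exp ((↑(θ + Real.pi)) * I) = -Complex.exp (θ * I) := by
      push_cast
      rw [add_mul, Complex.exp_add, Complex.exp_pi_mul_I]
      ring
    rw [this]; ring
  have key' : ∀ θ : ℝ, circleMap (-(0:ℂ)) R θ = -(circleMap 0 R (θ + Real.pi)) := by
    intro θ
    simp only [circleMap]
    have : Complex.exp ((↑(θ + Real.pi)) * I) = -Complex.exp (θ * I) := by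
      push_cast
      rw [add_mul, Complex.exp_add, Complex.exp_pi_mul_I]
      ring
    rw [this]; ring
  have hper : Function.Periodic
      (fun θ : ℝ => deriv (circleMap c R) θ • f (-circleMap c R θ)) (2 * Real.pi) := by
    intro θ
    simp only [deriv_circleMap, smul_eq_mul]
    rw [periodic_circleMap 0 R θ, periodic_circleMap c R θ]
  calc (∮ z in C(-c, R), f z)
      = ∫ θ in (0:ℝ)..2 * Real.pi,
          -(deriv (circleMap c R) (θ + Real.pi) • f (-circleMap c R (θ + Real.pi))) := by
        unfold circleIntegral
        refine intervalIntegral.integral_congr fun θ _ => ?_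
        rw [key θ]
        simp only [deriv_circleMap, smul_eq_mul]
        have h2 : circleMap 0 R (θ + Real.pi) = -circleMap 0 R θ := by
          have hk : circleMap (-(0:ℂ)) R (θ) = -circleMap 0 R (θ + Real.pi) := key' θ
          rw [neg_zero] at hk
          rw [hk]; ring
        rw [h2]; ring
    _ = -∫ θ in (0:ℝ)..2 * Real.pi,
          deriv (circleMap c R) (θ + Real.pi) • f (-circleMap c R (θ + Real.pi)) := by
        rw [intervalIntegral.integral_neg]
    _ = -∮ z in C(c, R), f (-z) := by
        unfold circleIntegral
        congr 1
        have := intervalIntegral.integral_comp_add_right (a := (0:ℝ)) (b := 2 * Real.pi)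
          (fun θ : ℝ => deriv (circleMap c R) θ • f (-circleMap c R θ)) Real.pi
        rw [this, zero_add]
        have h2 := hper.intervalIntegral_add_eq Real.pi 0
        rw [add_comm Real.pi (2*Real.pi)] at h2
        rw [zero_add] at h2
        exact h2

/-- The complement of `{1, -1}` in `ℂ`. -/
def Uset : Set ℂ := ({1, -1} : Set ℂ)ᶜ

lemma isOpen_Uset : IsOpen Uset :=
  (Set.Finite.isClosed (Set.toFinite _)).isOpen_compl

lemma mem_Uset {z : ℂ} : z ∈ Uset ↔ z ≠ 1 ∧ z ≠ -1 := by
  simp [Uset, not_or]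

lemma neg_mem_Uset {z : ℂ} (h : z ∈ Uset) : -z ∈ Uset := by
  rw [mem_Uset] at h ⊢
  constructor
  · intro hz; apply h.2; rw [← neg_eq_iff_eq_neg.mpr hz.symm]
  · intro hz; apply h.1; have := neg_injective hz; simpa using this

lemma analyticOnNhd_iter (n : ℕ) : AnalyticOnNhd ℂ (eulerOp^[n] psiFn) Uset := by
  induction n with
  | zero =>
    simp only [Function.iterate_zero, id]
    have hden : ∀ z ∈ Uset, 1 - z ^ 2 ≠ 0 := by
      intro z hz h
      rw [mem_Uset] at hz
      have h2 : (1 - z) * (1 + z) = 0 := by ring_nf; linear_combination h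
      rcases mul_eq_zero.mp h2 with h3 | h3
      · exact hz.1 (by linear_combination -h3)
      · exact hz.2 (by linear_combination h3)
    have : DifferentiableOn ℂ psiFn Uset := by
      apply DifferentiableOn.div differentiableOn_id
      · exact (differentiableOn_const 1).sub (differentiableOn_pow 2)
      · exact hden
    exact this.analyticOnNhd isOpen_Uset
  | succ n ih =>
    rw [Function.iterate_succ']
    exact fun z hz => (analyticAt_id.mul ((ih.deriv) z hz))

lemma odd_iter (n : ℕ) : ∀ w ∈ Uset, eulerOp^[n] psiFn (-w) = -(eulerOp^[n] psiFn w) := by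
  induction n with
  | zero =>
    intro w _
    simp only [Function.iterate_zero, id, psiFn, neg_sq, neg_div]
  | succ n ih =>
    intro w hw
    rw [Function.iterate_succ']
    simp only [Function.comp_apply, eulerOp]
    have hderiv : deriv (eulerOp^[n] psiFn) (-w) = deriv (eulerOp^[n] psiFn) w := by
      have hev : eulerOp^[n] psiFn =ᶠ[nhds (-w)] fun z => -(eulerOp^[n] psiFn (-z)) := by
        filter_upwards [isOpen_Uset.mem_nhds (neg_mem_Uset hw)] with z hz
        have := ih (-z) (by simpa using neg_mem_Uset hz)
        rw [neg_neg] at this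
        rw [this]
      rw [hev.deriv_eq, deriv.fun_neg, deriv_comp_neg, neg_neg, neg_neg]
    rw [hderiv]; ring

lemma xiOdd_even (k : ℕ) {w : ℂ} (hw : w ∈ Uset) : xiOdd k (-w) = xiOdd k w := by
  unfold xiOdd
  have hev : eulerOp^[2 * k] psiFn =ᶠ[nhds (-w)] fun z => -(eulerOp^[2 * k] psiFn (-z)) := by
    filter_upwards [isOpen_Uset.mem_nhds (neg_mem_Uset hw)] with z hz
    have := odd_iter (2 * k) (-z) (by simpa using neg_mem_Uset hz)
    rw [neg_neg] at this
    rw [this]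
  rw [hev.deriv_eq, deriv.fun_neg, deriv_comp_neg, neg_neg, neg_neg]

/-- The sum of the residues of `ξᵒₖ(z)·log z` at `z = ±1` vanishes (it equals the
residue of `ξᵒₖ` at `z = 0`); residues are expressed as circle integrals. -/
theorem residue_log_odd (k : ℕ) (ε : ℝ) (hε0 : 0 < ε) (hε1 : ε < 1) :
    (1 / (2 * Real.pi * Complex.I)) *
      ((∮ z in C(1, ε), xiOdd k z * Complex.log z) +
        (∮ z in C(-1, ε), xiOdd k z * (Complex.log (-z) + Real.pi * Complex.I))) =
      0 := by
  have hsub : sphere (1 : ℂ) ε ⊆ Uset := by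
    intro z hz
    rw [mem_sphere_iff_norm] at hz
    rw [mem_Uset]
    constructor
    · intro h; rw [h] at hz; simp at hz; linarith
    · intro h; rw [h] at hz
      have : ‖(-1 : ℂ) - 1‖ = 2 := by norm_num
      rw [this] at hz; linarith
  have hre : ∀ z ∈ sphere (1 : ℂ) ε, 0 < z.re := by
    intro z hz
    rw [mem_sphere_iff_norm] at hz
    have h1 : |(z - 1).re| ≤ ‖z - 1‖ := Complex.abs_re_le_norm _
    rw [hz] at h1
    have : (z - 1).re = z.re - 1 := by simp
    rw [this] at h1
    have := abs_le.mp h1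
    linarith [this.1]
  have hxiA : AnalyticOnNhd ℂ (xiOdd k) Uset := (analyticOnNhd_iter (2 * k)).deriv
  have hxiC : ContinuousOn (xiOdd k) (sphere (1 : ℂ) ε) :=
    (hxiA.continuousOn).mono hsub
  have hlogC : ContinuousOn Complex.log (sphere (1 : ℂ) ε) := fun z hz =>
    (continuousAt_clog (Complex.mem_slitPlane_iff.mpr (Or.inl (hre z hz)))).continuousWithinAt
  have hInt1 : CircleIntegrable (fun z => xiOdd k z * Complex.log z) 1 ε :=
    (hxiC.mul hlogC).circleIntegrable hε0.le
  have hIntc : CircleIntegrable (fun z => xiOdd k z * (Real.pi * Complex.I)) 1 ε :=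
    (hxiC.mul continuousOn_const).circleIntegrable hε0.le
  have hInt3 : CircleIntegrable
      (fun z => xiOdd k z * (Complex.log z + Real.pi * Complex.I)) 1 ε :=
    (hxiC.mul (hlogC.add continuousOn_const)).circleIntegrable hε0.le
  have hzero : (∮ z in C(1, ε), xiOdd k z) = 0 := by
    apply circleIntegral.integral_eq_zero_of_hasDerivWithinAt hε0.le
      (f := eulerOp^[2 * k] psiFn)
    intro z hz
    exact (((analyticOnNhd_iter (2 * k)) z (hsub hz)).differentiableAt.hasDerivAt).hasDerivWithinAt
  have hconst : (∮ z in C(1, ε), xiOdd k z * (Real.pi * Complex.I)) = 0 := by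
    have : (fun z => xiOdd k z * (Real.pi * Complex.I)) =
        fun z => ((Real.pi : ℂ) * Complex.I) • xiOdd k z := by
      funext z; simp [smul_eq_mul]; ring
    rw [this, circleIntegral.integral_smul, hzero, smul_zero]
  have hsplit : (∮ z in C(1, ε), xiOdd k z * (Complex.log z + Real.pi * Complex.I)) =
      (∮ z in C(1, ε), xiOdd k z * Complex.log z) := by
    have h1 : (∮ z in C(1, ε), xiOdd k z * Complex.log z) =
        ∮ z in C(1, ε), (xiOdd k z * (Complex.log z + Real.pi * Complex.I)
          - xiOdd k z * (Real.pi * Complex.I)) := by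
      apply circleIntegral.integral_congr hε0.le
      intro z _; simp; ring
    rw [h1, circleIntegral.integral_sub hInt3 hIntc, hconst, sub_zero]
  have hB : (∮ z in C(-1, ε), xiOdd k z * (Complex.log (-z) + Real.pi * Complex.I)) =
      -(∮ z in C(1, ε), xiOdd k z * Complex.log z) := by
    have h0 : ((-1 : ℂ)) = -(1 : ℂ) := by norm_num
    rw [h0, circleIntegral_neg_center
      (fun z => xiOdd k z * (Complex.log (-z) + Real.pi * Complex.I)) 1 ε]
    have hcg : (∮ z in C(1, ε),
        xiOdd k (-z) * (Complex.log (- -z) + Real.pi * Complex.I)) =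
        ∮ z in C(1, ε), xiOdd k z * (Complex.log z + Real.pi * Complex.I) := by
      apply circleIntegral.integral_congr hε0.le
      intro z hz
      simp only [neg_neg]
      rw [xiOdd_even k (hsub hz)]
    rw [hcg, hsplit]
  rw [hB]
  ring
end

section
/- For all z₁, z₂, z₃ ∈ ℂ with 0 < |zᵢ| < 1, the series over (b₁,b₂,b₃) ∈ ℕ³ whose term is ∏_{i=1}^3 [bᵢ]·zᵢ^{bᵢ−1} when b₁+b₂+b₃ is even and 0 otherwise, converges (HasSum) with sum (1/(2·z₁·z₂·z₃))·( ∏_{i=1}^3 (zᵢ²−zᵢ+1)/(zᵢ−1)² + ∏_{i=1}^3 (zᵢ²+zᵢ+1)/(zᵢ+1)² ). -/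
set_option maxHeartbeats 1000000

section aux

variable {K : Type*} [NormedField K] [CompleteSpace K]

lemma br_hasSum {z : K} (h0 : z ≠ 0) (h1 : ‖z‖ < 1) :
    HasSum (fun b : ℕ => (br b : K) * z ^ ((b : ℤ) - 1))
      ((z ^ 2 - z + 1) / (z * (z - 1) ^ 2)) := by
  have hg : HasSum (fun n : ℕ => (n : K) * z ^ n) (z / (1 - z) ^ 2) :=
    hasSum_coe_mul_geometric_of_norm_lt_one h1
  have hδ : HasSum (fun n : ℕ => if n = 0 then (1 : K) else 0) 1 := by
    simpa using hasSum_ite_eq 0 (1 : K)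
  have hz1 : (1 : K) - z ≠ 0 := by
    intro h
    rw [sub_eq_zero] at h
    rw [← h] at h1
    simp at h1
  have H := ((hg.add hδ).mul_left z⁻¹)
  have hpt : (fun b : ℕ => (br b : K) * z ^ ((b : ℤ) - 1)) =
      fun b : ℕ => z⁻¹ * ((b : K) * z ^ b + if b = 0 then 1 else 0) := by
    funext b
    rcases Nat.eq_zero_or_pos b with hb | hb
    · subst hb
      simp [br, zpow_neg, zpow_one]
    · have hb' : b ≠ 0 := hb.ne'
      have : z ^ ((b : ℤ) - 1) = z ^ b * z⁻¹ := by
        rw [zpow_sub₀ h0, zpow_natCast, zpow_one, div_eq_mul_inv]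
      rw [this]
      simp only [br, hb', if_false]
      ring
  have hval : (z ^ 2 - z + 1) / (z * (z - 1) ^ 2) = z⁻¹ * (z / (1 - z) ^ 2 + 1) := by
    have hz1' : z - 1 ≠ 0 := by
      intro h; apply hz1; rw [sub_eq_zero] at h ⊢; exact h.symm
    field_simp
    ring
  rw [hpt, hval]
  exact H

end aux

lemma br_summable_norm {z : ℂ} (h0 : z ≠ 0) (h1 : ‖z‖ < 1) :
    Summable (fun b : ℕ => ‖(br b : ℂ) * z ^ ((b : ℤ) - 1)‖) := by
  have h0' : (‖z‖ : ℝ) ≠ 0 := norm_ne_zero_iff.mpr h0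
  have h1' : ‖(‖z‖ : ℝ)‖ < 1 := by simpa [abs_of_nonneg (norm_nonneg z)] using h1
  have := (br_hasSum (K := ℝ) h0' h1').summable
  apply this.congr
  intro b
  rw [norm_mul, norm_zpow]
  norm_num

lemma br_neg_hasSum {z : ℂ} (h0 : z ≠ 0) (h1 : ‖z‖ < 1) :
    HasSum (fun b : ℕ => (-1 : ℂ) ^ b * ((br b : ℂ) * z ^ ((b : ℤ) - 1)))
      ((z ^ 2 + z + 1) / (z * (z + 1) ^ 2)) := by
  have hn0 : (-z : ℂ) ≠ 0 := neg_ne_zero.mpr h0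
  have hn1 : ‖(-z : ℂ)‖ < 1 := by simpa using h1
  have H := (br_hasSum hn0 hn1).neg
  have hpt : (fun b : ℕ => -((br b : ℂ) * (-z) ^ ((b : ℤ) - 1))) =
      fun b : ℕ => (-1 : ℂ) ^ b * ((br b : ℂ) * z ^ ((b : ℤ) - 1)) := by
    funext b
    have h1' : (-z : ℂ) ^ ((b : ℤ) - 1) = (-z) ^ b * (-z)⁻¹ := by
      rw [zpow_sub₀ hn0, zpow_natCast, zpow_one, div_eq_mul_inv]
    have h2' : z ^ ((b : ℤ) - 1) = z ^ b * z⁻¹ := by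
      rw [zpow_sub₀ h0, zpow_natCast, zpow_one, div_eq_mul_inv]
    rw [h1', h2', neg_pow, inv_neg]
    ring
  have hval : -(((-z) ^ 2 - -z + 1) / (-z * (-z - 1) ^ 2)) =
      (z ^ 2 + z + 1) / (z * (z + 1) ^ 2) := by
    have hz1 : z + 1 ≠ 0 := by
      intro h
      have : z = -1 := eq_neg_of_add_eq_zero_left h
      rw [this] at h1
      simp at h1
    have hz1' : -z - 1 ≠ 0 := by
      intro h; apply hz1
      have : -z = 1 := by rw [sub_eq_zero] at h; exact h
      rw [show z = -(1:ℂ) from by rw [← this]; ring]; ring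
    field_simp
    ring
  rw [← hval]
  rw [← hpt]
  exact H

/-- Closed form of the generating function `Ω₀,₃` of the lattice point count
`N̄₀,₃(b₁,b₂,b₃)` (which is `1` for `b₁+b₂+b₃` even and `0` otherwise). -/
theorem omega03_closed_form (z₁ z₂ z₃ : ℂ)
    (h₁ : 0 < ‖z₁‖ ∧ ‖z₁‖ < 1) (h₂ : 0 < ‖z₂‖ ∧ ‖z₂‖ < 1)
    (h₃ : 0 < ‖z₃‖ ∧ ‖z₃‖ < 1) :
    HasSum
      (fun b : ℕ × ℕ × ℕ =>
        if Even (b.1 + b.2.1 + b.2.2) then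
          (br b.1 : ℂ) * z₁ ^ ((b.1 : ℤ) - 1) *
            ((br b.2.1 : ℂ) * z₂ ^ ((b.2.1 : ℤ) - 1)) *
            ((br b.2.2 : ℂ) * z₃ ^ ((b.2.2 : ℤ) - 1))
        else 0)
      ((1 / (2 * z₁ * z₂ * z₃)) *
        ((z₁ ^ 2 - z₁ + 1) / (z₁ - 1) ^ 2 * ((z₂ ^ 2 - z₂ + 1) / (z₂ - 1) ^ 2) *
            ((z₃ ^ 2 - z₃ + 1) / (z₃ - 1) ^ 2) +
          (z₁ ^ 2 + z₁ + 1) / (z₁ + 1) ^ 2 * ((z₂ ^ 2 + z₂ + 1) / (z₂ + 1) ^ 2) *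
            ((z₃ ^ 2 + z₃ + 1) / (z₃ + 1) ^ 2))) := by
  obtain ⟨h₁0, h₁1⟩ := h₁
  obtain ⟨h₂0, h₂1⟩ := h₂
  obtain ⟨h₃0, h₃1⟩ := h₃
  have hz₁ : z₁ ≠ 0 := norm_pos_iff.mp h₁0
  have hz₂ : z₂ ≠ 0 := norm_pos_iff.mp h₂0
  have hz₃ : z₃ ≠ 0 := norm_pos_iff.mp h₃0
  -- norm summability
  have n₁ := br_summable_norm hz₁ h₁1
  have n₂ := br_summable_norm hz₂ h₂1
  have n₃ := br_summable_norm hz₃ h₃1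
  have nk : ∀ (g : ℕ → ℂ), Summable (fun b => ‖g b‖) →
      Summable (fun b : ℕ => ‖(-1 : ℂ) ^ b * g b‖) := by
    intro g hg
    apply hg.congr
    intro b
    simp
  -- the two triple sums
  have hG : HasSum (fun b : ℕ × ℕ × ℕ =>
      ((br b.1 : ℂ) * z₁ ^ ((b.1 : ℤ) - 1)) *
        (((br b.2.1 : ℂ) * z₂ ^ ((b.2.1 : ℤ) - 1)) *
          ((br b.2.2 : ℂ) * z₃ ^ ((b.2.2 : ℤ) - 1))))
      ((z₁ ^ 2 - z₁ + 1) / (z₁ * (z₁ - 1) ^ 2) *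
        ((z₂ ^ 2 - z₂ + 1) / (z₂ * (z₂ - 1) ^ 2) *
          ((z₃ ^ 2 - z₃ + 1) / (z₃ * (z₃ - 1) ^ 2)))) := by
    have s23 : Summable (fun x : ℕ × ℕ =>
        ((br x.1 : ℂ) * z₂ ^ ((x.1 : ℤ) - 1)) * ((br x.2 : ℂ) * z₃ ^ ((x.2 : ℤ) - 1))) :=
      summable_mul_of_summable_norm
        (f := fun b : ℕ => (br b : ℂ) * z₂ ^ ((b : ℤ) - 1))
        (g := fun b : ℕ => (br b : ℂ) * z₃ ^ ((b : ℤ) - 1)) n₂ n₃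
    have h23 := HasSum.mul
      (f := fun b : ℕ => (br b : ℂ) * z₂ ^ ((b : ℤ) - 1))
      (g := fun b : ℕ => (br b : ℂ) * z₃ ^ ((b : ℤ) - 1))
      (br_hasSum hz₂ h₂1) (br_hasSum hz₃ h₃1) s23
    have s123 : Summable (fun x : ℕ × ℕ × ℕ =>
        ((br x.1 : ℂ) * z₁ ^ ((x.1 : ℤ) - 1)) *
          (((br x.2.1 : ℂ) * z₂ ^ ((x.2.1 : ℤ) - 1)) *
            ((br x.2.2 : ℂ) * z₃ ^ ((x.2.2 : ℤ) - 1)))) :=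
      summable_mul_of_summable_norm
        (f := fun b : ℕ => (br b : ℂ) * z₁ ^ ((b : ℤ) - 1))
        (g := fun p : ℕ × ℕ =>
          ((br p.1 : ℂ) * z₂ ^ ((p.1 : ℤ) - 1)) * ((br p.2 : ℂ) * z₃ ^ ((p.2 : ℤ) - 1))) n₁
        (Summable.mul_norm
          (f := fun b : ℕ => (br b : ℂ) * z₂ ^ ((b : ℤ) - 1))
          (g := fun b : ℕ => (br b : ℂ) * z₃ ^ ((b : ℤ) - 1)) n₂ n₃)
    exact HasSum.mul
      (f := fun b : ℕ => (br b : ℂ) * z₁ ^ ((b : ℤ) - 1))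
      (g := fun p : ℕ × ℕ =>
        ((br p.1 : ℂ) * z₂ ^ ((p.1 : ℤ) - 1)) * ((br p.2 : ℂ) * z₃ ^ ((p.2 : ℤ) - 1)))
      (br_hasSum hz₁ h₁1) h23 s123
  have hH : HasSum (fun b : ℕ × ℕ × ℕ =>
      ((-1 : ℂ) ^ b.1 * ((br b.1 : ℂ) * z₁ ^ ((b.1 : ℤ) - 1))) *
        (((-1 : ℂ) ^ b.2.1 * ((br b.2.1 : ℂ) * z₂ ^ ((b.2.1 : ℤ) - 1))) *
          ((-1 : ℂ) ^ b.2.2 * ((br b.2.2 : ℂ) * z₃ ^ ((b.2.2 : ℤ) - 1)))))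
      ((z₁ ^ 2 + z₁ + 1) / (z₁ * (z₁ + 1) ^ 2) *
        ((z₂ ^ 2 + z₂ + 1) / (z₂ * (z₂ + 1) ^ 2) *
          ((z₃ ^ 2 + z₃ + 1) / (z₃ * (z₃ + 1) ^ 2)))) := by
    have s23 : Summable (fun x : ℕ × ℕ =>
        ((-1 : ℂ) ^ x.1 * ((br x.1 : ℂ) * z₂ ^ ((x.1 : ℤ) - 1))) *
          ((-1 : ℂ) ^ x.2 * ((br x.2 : ℂ) * z₃ ^ ((x.2 : ℤ) - 1)))) :=
      summable_mul_of_summable_norm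
        (f := fun b : ℕ => (-1 : ℂ) ^ b * ((br b : ℂ) * z₂ ^ ((b : ℤ) - 1)))
        (g := fun b : ℕ => (-1 : ℂ) ^ b * ((br b : ℂ) * z₃ ^ ((b : ℤ) - 1)))
        (nk _ n₂) (nk _ n₃)
    have h23 := HasSum.mul
      (f := fun b : ℕ => (-1 : ℂ) ^ b * ((br b : ℂ) * z₂ ^ ((b : ℤ) - 1)))
      (g := fun b : ℕ => (-1 : ℂ) ^ b * ((br b : ℂ) * z₃ ^ ((b : ℤ) - 1)))
      (br_neg_hasSum hz₂ h₂1) (br_neg_hasSum hz₃ h₃1) s23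
    have s123 : Summable (fun x : ℕ × ℕ × ℕ =>
        ((-1 : ℂ) ^ x.1 * ((br x.1 : ℂ) * z₁ ^ ((x.1 : ℤ) - 1))) *
          (((-1 : ℂ) ^ x.2.1 * ((br x.2.1 : ℂ) * z₂ ^ ((x.2.1 : ℤ) - 1))) *
            ((-1 : ℂ) ^ x.2.2 * ((br x.2.2 : ℂ) * z₃ ^ ((x.2.2 : ℤ) - 1))))) :=
      summable_mul_of_summable_norm
        (f := fun b : ℕ => (-1 : ℂ) ^ b * ((br b : ℂ) * z₁ ^ ((b : ℤ) - 1)))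
        (g := fun p : ℕ × ℕ =>
          ((-1 : ℂ) ^ p.1 * ((br p.1 : ℂ) * z₂ ^ ((p.1 : ℤ) - 1))) *
            ((-1 : ℂ) ^ p.2 * ((br p.2 : ℂ) * z₃ ^ ((p.2 : ℤ) - 1)))) (nk _ n₁)
        (Summable.mul_norm
          (f := fun b : ℕ => (-1 : ℂ) ^ b * ((br b : ℂ) * z₂ ^ ((b : ℤ) - 1)))
          (g := fun b : ℕ => (-1 : ℂ) ^ b * ((br b : ℂ) * z₃ ^ ((b : ℤ) - 1)))
          (nk _ n₂) (nk _ n₃))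
    exact HasSum.mul
      (f := fun b : ℕ => (-1 : ℂ) ^ b * ((br b : ℂ) * z₁ ^ ((b : ℤ) - 1)))
      (g := fun p : ℕ × ℕ =>
        ((-1 : ℂ) ^ p.1 * ((br p.1 : ℂ) * z₂ ^ ((p.1 : ℤ) - 1))) *
          ((-1 : ℂ) ^ p.2 * ((br p.2 : ℂ) * z₃ ^ ((p.2 : ℤ) - 1))))
      (br_neg_hasSum hz₁ h₁1) h23 s123
  have hGH := (hG.add hH).mul_left (1 / 2 : ℂ)
  have hfun : (fun b : ℕ × ℕ × ℕ =>
        if Even (b.1 + b.2.1 + b.2.2) then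
          (br b.1 : ℂ) * z₁ ^ ((b.1 : ℤ) - 1) *
            ((br b.2.1 : ℂ) * z₂ ^ ((b.2.1 : ℤ) - 1)) *
            ((br b.2.2 : ℂ) * z₃ ^ ((b.2.2 : ℤ) - 1))
        else 0) =
      fun b : ℕ × ℕ × ℕ => (1 / 2 : ℂ) *
        (((br b.1 : ℂ) * z₁ ^ ((b.1 : ℤ) - 1)) *
            (((br b.2.1 : ℂ) * z₂ ^ ((b.2.1 : ℤ) - 1)) *
              ((br b.2.2 : ℂ) * z₃ ^ ((b.2.2 : ℤ) - 1))) +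
          ((-1 : ℂ) ^ b.1 * ((br b.1 : ℂ) * z₁ ^ ((b.1 : ℤ) - 1))) *
            (((-1 : ℂ) ^ b.2.1 * ((br b.2.1 : ℂ) * z₂ ^ ((b.2.1 : ℤ) - 1))) *
              ((-1 : ℂ) ^ b.2.2 * ((br b.2.2 : ℂ) * z₃ ^ ((b.2.2 : ℤ) - 1))))) := by
    funext b
    obtain ⟨b₁, b₂, b₃⟩ := b
    simp only
    have hsgn : (-1 : ℂ) ^ b₁ * ((-1 : ℂ) ^ b₂ * (-1 : ℂ) ^ b₃) =
        (-1 : ℂ) ^ (b₁ + b₂ + b₃) := by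
      rw [pow_add, pow_add]; ring
    have key : ((-1 : ℂ) ^ b₁ * ((br b₁ : ℂ) * z₁ ^ ((b₁ : ℤ) - 1))) *
        (((-1 : ℂ) ^ b₂ * ((br b₂ : ℂ) * z₂ ^ ((b₂ : ℤ) - 1))) *
          ((-1 : ℂ) ^ b₃ * ((br b₃ : ℂ) * z₃ ^ ((b₃ : ℤ) - 1)))) =
        ((-1 : ℂ) ^ b₁ * ((-1 : ℂ) ^ b₂ * (-1 : ℂ) ^ b₃)) *
          (((br b₁ : ℂ) * z₁ ^ ((b₁ : ℤ) - 1)) *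
            (((br b₂ : ℂ) * z₂ ^ ((b₂ : ℤ) - 1)) *
              ((br b₃ : ℂ) * z₃ ^ ((b₃ : ℤ) - 1)))) := by ring
    rcases Nat.even_or_odd (b₁ + b₂ + b₃) with he | ho
    · rw [if_pos he, key, hsgn, he.neg_one_pow, one_mul]
      ring
    · rw [if_neg (Nat.not_even_iff_odd.mpr ho), key, hsgn, ho.neg_one_pow]
      ring
  have hz₁1 : z₁ - 1 ≠ 0 := by
    intro h; rw [sub_eq_zero] at h; rw [h] at h₁1; simp at h₁1
  have hz₂1 : z₂ - 1 ≠ 0 := by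
    intro h; rw [sub_eq_zero] at h; rw [h] at h₂1; simp at h₂1
  have hz₃1 : z₃ - 1 ≠ 0 := by
    intro h; rw [sub_eq_zero] at h; rw [h] at h₃1; simp at h₃1
  have hz₁2 : z₁ + 1 ≠ 0 := by
    intro h; rw [eq_neg_of_add_eq_zero_left h] at h₁1; simp at h₁1
  have hz₂2 : z₂ + 1 ≠ 0 := by
    intro h; rw [eq_neg_of_add_eq_zero_left h] at h₂1; simp at h₂1
  have hz₃2 : z₃ + 1 ≠ 0 := by
    intro h; rw [eq_neg_of_add_eq_zero_left h] at h₃1; simp at h₃1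
  have key : ∀ w : ℂ, ∀ a : ℂ, a / (w * (w - 1) ^ 2) = a / (w - 1) ^ 2 / w := fun w a => by
    rw [div_mul_eq_div_div_swap]
  have key' : ∀ w : ℂ, ∀ a : ℂ, a / (w * (w + 1) ^ 2) = a / (w + 1) ^ 2 / w := fun w a => by
    rw [div_mul_eq_div_div_swap]
  have hval : ((1 / (2 * z₁ * z₂ * z₃)) *
        ((z₁ ^ 2 - z₁ + 1) / (z₁ - 1) ^ 2 * ((z₂ ^ 2 - z₂ + 1) / (z₂ - 1) ^ 2) *
            ((z₃ ^ 2 - z₃ + 1) / (z₃ - 1) ^ 2) +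
          (z₁ ^ 2 + z₁ + 1) / (z₁ + 1) ^ 2 * ((z₂ ^ 2 + z₂ + 1) / (z₂ + 1) ^ 2) *
            ((z₃ ^ 2 + z₃ + 1) / (z₃ + 1) ^ 2))) =
      (1 / 2 : ℂ) *
        ((z₁ ^ 2 - z₁ + 1) / (z₁ * (z₁ - 1) ^ 2) *
            ((z₂ ^ 2 - z₂ + 1) / (z₂ * (z₂ - 1) ^ 2) *
              ((z₃ ^ 2 - z₃ + 1) / (z₃ * (z₃ - 1) ^ 2))) +
          (z₁ ^ 2 + z₁ + 1) / (z₁ * (z₁ + 1) ^ 2) *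
            ((z₂ ^ 2 + z₂ + 1) / (z₂ * (z₂ + 1) ^ 2) *
              ((z₃ ^ 2 + z₃ + 1) / (z₃ * (z₃ + 1) ^ 2)))) := by
    rw [key z₁, key z₂, key z₃, key' z₁, key' z₂, key' z₃]
    generalize (z₁ ^ 2 - z₁ + 1) / (z₁ - 1) ^ 2 = a₁
    generalize (z₂ ^ 2 - z₂ + 1) / (z₂ - 1) ^ 2 = a₂
    generalize (z₃ ^ 2 - z₃ + 1) / (z₃ - 1) ^ 2 = a₃
    generalize (z₁ ^ 2 + z₁ + 1) / (z₁ + 1) ^ 2 = b₁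
    generalize (z₂ ^ 2 + z₂ + 1) / (z₂ + 1) ^ 2 = b₂
    generalize (z₃ ^ 2 + z₃ + 1) / (z₃ + 1) ^ 2 = b₃
    field_simp
  rw [hfun, hval]
  exact hGH
end

section
/- For every z ∈ ℂ with 0 < |z| < 1, the series ∑_{b∈ℕ, b even} [b]·((b²+20)/48)·z^{b−1} (the b = 0 term equals (20/48)/z) converges with sum (5z⁸ − 8z⁶ + 18z⁴ − 8z² + 5)/(12·z·(z²−1)⁴). -/
lemma choose3_nat (n : ℕ) : 6 * (n + 3).choose 3 = (n+1)*(n+2)*(n+3) := by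
  have h := Nat.descFactorial_eq_factorial_mul_choose (n+3) 3
  have h2 : (n+3).descFactorial 3 = (n+1)*(n+2)*(n+3) := by
    simp [Nat.descFactorial_succ, Nat.descFactorial_zero]
    try ring
  rw [h2] at h
  simp [Nat.factorial] at h
  omega

lemma choose2_nat (n : ℕ) : 2 * (n + 2).choose 2 = (n+1)*(n+2) := by
  have h := Nat.descFactorial_eq_factorial_mul_choose (n+2) 2
  have h2 : (n+2).descFactorial 2 = (n+1)*(n+2) := by
    simp [Nat.descFactorial_succ, Nat.descFactorial_zero]
    try ring
  rw [h2] at h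
  simp [Nat.factorial] at h
  omega

lemma choose3_cast (n : ℕ) :
    ((n + 3).choose 3 : ℂ) = ((n:ℂ)+1)*((n:ℂ)+2)*((n:ℂ)+3)/6 := by
  have h := choose3_nat n
  have : (6 * (n + 3).choose 3 : ℂ) = ((n:ℂ)+1)*((n:ℂ)+2)*((n:ℂ)+3) := by
    exact_mod_cast congrArg (fun k : ℕ => (k : ℂ)) h
  field_simp
  linear_combination this

lemma choose2_cast (n : ℕ) :
    ((n + 2).choose 2 : ℂ) = ((n:ℂ)+1)*((n:ℂ)+2)/2 := by
  have h := choose2_nat n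
  have : (2 * (n + 2).choose 2 : ℂ) = ((n:ℂ)+1)*((n:ℂ)+2) := by
    exact_mod_cast congrArg (fun k : ℕ => (k : ℂ)) h
  field_simp
  linear_combination this

lemma frac_step (t : ℂ) (ht : t ≠ 0) :
    1/t^4 - 2*(1/t^3) + (2*(1/t^2) - t⁻¹) + 5/12
      = (12 - 24*t + 24*t^2 - 12*t^3 + 5*t^4)/(12*t^4) := by
  have h10 : t^10 * t⁻¹^10 = 1 := by rw [← mul_pow, mul_inv_cancel₀ ht, one_pow]
  field_simp
  ring

lemma closed_form_algebra (u v : ℂ) (hu : u ≠ 0) (hv : (1:ℂ) - v ≠ 0) :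
    u⁻¹ * (1 / (1 - v) ^ 4 - 2 * (1 / (1 - v) ^ 3) + (2 * (1 / (1 - v) ^ 2) - (1 - v)⁻¹)
      + 5 / 12)
    = (5 * v ^ 4 - 8 * v ^ 3 + 18 * v ^ 2 - 8 * v + 5) / (12 * u * (v - 1) ^ 4) := by
  have hv' : (v - 1 : ℂ) ≠ 0 := by
    intro h; apply hv; linear_combination -h
  rw [frac_step (1 - v) hv, inv_mul_eq_div, div_div, div_eq_div_iff]
  · ring
  · exact mul_ne_zero (mul_ne_zero (by norm_num) (pow_ne_zero _ hv)) hu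
  · exact mul_ne_zero (mul_ne_zero (by norm_num) hu) (pow_ne_zero _ hv')

/-- Closed form of the generating function `Ω₁,₁` of the lattice point count
`N̄₁,₁(b) = (b²+20)/48` for even `b` (and `0` for odd `b`). -/
theorem omega11_closed_form (z : ℂ) (hz0 : 0 < ‖z‖) (hz1 : ‖z‖ < 1) :
    HasSum
      (fun b : ℕ =>
        if Even b then
          (br b : ℂ) * (((b : ℂ) ^ 2 + 20) / 48) * z ^ ((b : ℤ) - 1)
        else 0)
      ((5 * z ^ 8 - 8 * z ^ 6 + 18 * z ^ 4 - 8 * z ^ 2 + 5) /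
        (12 * z * (z ^ 2 - 1) ^ 4)) := by
  have hz : z ≠ 0 := by simpa using hz0.ne'
  set w : ℂ := z ^ 2 with hw
  have hw1 : ‖w‖ < 1 := by
    rw [hw, norm_pow]
    calc ‖z‖ ^ 2 ≤ ‖z‖ := by nlinarith [hz0.le]
    _ < 1 := hz1
  have hwne : (1 : ℂ) - w ≠ 0 := by
    intro h
    have : w = 1 := by linear_combination -h
    rw [this] at hw1
    simp at hw1
  have h3 := hasSum_choose_mul_geometric_of_norm_lt_one 3 hw1
  have h2 := hasSum_choose_mul_geometric_of_norm_lt_one 2 hw1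
  have h1 := hasSum_choose_mul_geometric_of_norm_lt_one 1 hw1
  have h0 := hasSum_geometric_of_norm_lt_one hw1
  -- sum of (n^3 + 5n)/6 * w^n
  have hc : HasSum (fun n : ℕ => (((n : ℂ) ^ 3 + 5 * n) / 6) * w ^ n)
      (1 / (1 - w) ^ 4 - 2 * (1 / (1 - w) ^ 3) + (2 * (1 / (1 - w) ^ 2) - (1 - w)⁻¹)) := by
    have H := (h3.sub (h2.mul_left 2)).add ((h1.mul_left 2).sub h0)
    convert H using 2 with n
    · rfl
    rw [choose3_cast n, choose2_cast n]
    have : ((n + 1).choose 1 : ℂ) = (n : ℂ) + 1 := by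
      rw [Nat.choose_one_right]; push_cast; ring
    rw [this]
    ring
  -- add the delta at 0
  have hdelta : HasSum (fun n : ℕ => if n = 0 then (5/12 : ℂ) else 0) (5/12 : ℂ) :=
    hasSum_ite_eq 0 (5/12 : ℂ)
  have hcc := (hc.add hdelta).mul_left z⁻¹
  have key : HasSum
      (fun n : ℕ => z⁻¹ * ((((n : ℂ) ^ 3 + 5 * n) / 6) * w ^ n
        + if n = 0 then (5/12 : ℂ) else 0))
      ((5 * z ^ 8 - 8 * z ^ 6 + 18 * z ^ 4 - 8 * z ^ 2 + 5) /
        (12 * z * (z ^ 2 - 1) ^ 4)) := by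
    convert hcc using 1
    · rfl
    have := closed_form_algebra z w hz hwne
    rw [this, hw]
    ring_nf
  -- now transfer along the injection k ↦ 2k
  have hinj : Function.Injective (fun k : ℕ => 2 * k) := by
    intro a b h
    simpa using h
  rw [← Function.Injective.hasSum_iff hinj]
  · convert key using 1
    funext k
    have heven : Even (2 * k) := ⟨k, by ring⟩
    simp only [Function.comp, heven, if_true]
    have hzpow : z ^ (((2 * k : ℕ) : ℤ) - 1) = z ^ (2 * k) * z⁻¹ := by
      rw [zpow_sub₀ hz, zpow_natCast, zpow_one]
      rfl
    rw [hzpow, hw]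
    rcases Nat.eq_zero_or_pos k with hk | hk
    · subst hk
      simp [br]
      ring
    · have hbr : (br (2 * k) : ℂ) = 2 * (k : ℂ) := by
        unfold br
        rw [if_neg (by omega)]
        push_cast
        ring
      rw [hbr, if_neg hk.ne']
      push_cast
      rw [← pow_mul]
      ring
  · intro b hb
    rw [if_neg]
    rintro ⟨k, hk⟩
    exact hb ⟨k, by simp; omega⟩
end

section
/- Define W₀₂(u,v) = 1/(u−v)² + 1/(u·v), L₁(z) = Log z and L₋₁(z) = Log(−z) + πi. For all z₁, z₂, z₃ ∈ ℂ∖{0,1,−1} there exists ε₀ > 0 such that for every ε ∈ (0,ε₀): (1/(2πi))·∑_{α∈{1,−1}} ∮_{C(α,ε)} (1/(z₁−z) + L_α(z)/z₁)·(z/(1−z²)²)·( W₀₂(z,z₂)·W₀₂(1/z,z₃) + W₀₂(z,z₃)·W₀₂(1/z,z₂) ) dz = (1/(2·z₁·z₂·z₃))·( ∏_{i=1}^3 (zᵢ²−zᵢ+1)/(zᵢ−1)² + ∏_{i=1}^3 (zᵢ²+zᵢ+1)/(zᵢ+1)² ). -/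
/-- The modified bidifferential coefficient
`W₀₂(u,v) = 1/(u-v)² + 1/(u·v)`. -/
noncomputable def W02 (u v : ℂ) : ℂ := 1 / (u - v) ^ 2 + 1 / (u * v)


open Complex Metric

private lemma ne_of_mem_cb {c t z : ℂ} {ε : ℝ} (hz : z ∈ closedBall c ε)
    (h : ε < dist c t) : z ≠ t := by
  rintro rfl
  rw [dist_comm] at h
  exact absurd (mem_closedBall.mp hz) (not_le.mpr h)

private lemma hasDerivAt_W02_fst (v a : ℂ) (hav : a - v ≠ 0) (ha : a ≠ 0) (hv : v ≠ 0) :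
    HasDerivAt (fun u => W02 u v) (-2 / (a - v) ^ 3 - 1 / (a ^ 2 * v)) a := by
  have h1 : HasDerivAt (fun u : ℂ => (u - v) ^ 2) (2 * (a - v)) a := by
    simpa using ((hasDerivAt_id a).sub_const v).fun_pow 2
  have h2 : HasDerivAt (fun u : ℂ => u * v) v a := by
    simpa using (hasDerivAt_id a).mul_const v
  have h3 := (h1.fun_inv (pow_ne_zero 2 hav)).fun_add (h2.fun_inv (mul_ne_zero ha hv))
  have he : (fun u : ℂ => ((u - v) ^ 2)⁻¹ + (u * v)⁻¹) = fun u => W02 u v := by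
    funext u; simp [W02, one_div]
  rw [he] at h3
  refine h3.congr_deriv ?_
  field_simp
  ring

private lemma hasDerivAt_W02_inv (v a : ℂ) (hav : a⁻¹ - v ≠ 0) (ha : a ≠ 0) (hv : v ≠ 0) :
    HasDerivAt (fun u => W02 u⁻¹ v)
      ((-2 / (a⁻¹ - v) ^ 3 - 1 / ((a⁻¹) ^ 2 * v)) * (-(a ^ 2)⁻¹)) a := by
  have := (hasDerivAt_W02_fst v a⁻¹ hav (inv_ne_zero ha) hv).comp a (hasDerivAt_inv ha)
  simpa [Function.comp_def] using this

private lemma hasDerivAt_S_s9 (z₂ z₃ a : ℂ) (ha : a ≠ 0) (hz₂ : z₂ ≠ 0) (hz₃ : z₃ ≠ 0)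
    (h2 : a - z₂ ≠ 0) (h3 : a - z₃ ≠ 0) (hi2 : a⁻¹ - z₂ ≠ 0) (hi3 : a⁻¹ - z₃ ≠ 0) :
    HasDerivAt (fun z => W02 z z₂ * W02 z⁻¹ z₃ + W02 z z₃ * W02 z⁻¹ z₂)
      ((-2 / (a - z₂) ^ 3 - 1 / (a ^ 2 * z₂)) * W02 a⁻¹ z₃ +
        W02 a z₂ * ((-2 / (a⁻¹ - z₃) ^ 3 - 1 / ((a⁻¹) ^ 2 * z₃)) * (-(a ^ 2)⁻¹)) +
        ((-2 / (a - z₃) ^ 3 - 1 / (a ^ 2 * z₃)) * W02 a⁻¹ z₂ +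
          W02 a z₃ * ((-2 / (a⁻¹ - z₂) ^ 3 - 1 / ((a⁻¹) ^ 2 * z₂)) * (-(a ^ 2)⁻¹)))) a :=
  (((hasDerivAt_W02_fst z₂ a h2 ha hz₂).mul (hasDerivAt_W02_inv z₃ a hi3 ha hz₃)).add
    ((hasDerivAt_W02_fst z₃ a h3 ha hz₃).mul (hasDerivAt_W02_inv z₂ a hi2 ha hz₂)))

private lemma hasDerivAt_A1 (z₁ a : ℂ) (h : z₁ - a ≠ 0) (ha : a ∈ slitPlane) :
    HasDerivAt (fun z => 1 / (z₁ - z) + Complex.log z / z₁)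
      (1 / (z₁ - a) ^ 2 + a⁻¹ / z₁) a := by
  have h1 : HasDerivAt (fun z : ℂ => z₁ - z) (-1) a := by
    simpa using (hasDerivAt_id a).const_sub z₁
  have h2 := (h1.fun_inv h).fun_add ((Complex.hasDerivAt_log ha).div_const z₁)
  have he : (fun z : ℂ => 1 / (z₁ - z) + Complex.log z / z₁)
      = fun z => (z₁ - z)⁻¹ + Complex.log z / z₁ := by
    funext z; rw [one_div]
  rw [he]
  refine h2.congr_deriv ?_
  rw [one_div]
  ring

private lemma hasDerivAt_A2 (z₁ a : ℂ) (h : z₁ - a ≠ 0) (ha : -a ∈ slitPlane) :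
    HasDerivAt (fun z => 1 / (z₁ - z) + (Complex.log (-z) + (Real.pi : ℂ) * Complex.I) / z₁)
      (1 / (z₁ - a) ^ 2 + -(-a)⁻¹ / z₁) a := by
  have h1 : HasDerivAt (fun z : ℂ => z₁ - z) (-1) a := by
    simpa using (hasDerivAt_id a).const_sub z₁
  have hlog : HasDerivAt (fun z : ℂ => Complex.log (-z)) ((-a)⁻¹ * (-1)) a :=
    (Complex.hasDerivAt_log ha).comp a (hasDerivAt_neg a)
  have h2 := (h1.fun_inv h).fun_add
    ((hlog.add_const ((Real.pi : ℂ) * Complex.I)).div_const z₁)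
  have he : (fun z : ℂ => 1 / (z₁ - z) + (Complex.log (-z) + (Real.pi : ℂ) * Complex.I) / z₁)
      = fun z => (z₁ - z)⁻¹ + (Complex.log (-z) + (Real.pi : ℂ) * Complex.I) / z₁ := by
    funext z; rw [one_div]
  rw [he]
  refine h2.congr_deriv ?_
  rw [one_div]
  ring

private lemma hasDerivAt_B1 (a : ℂ) (h : 1 + a ≠ 0) :
    HasDerivAt (fun z : ℂ => z / (1 + z) ^ 2) ((1 - a) / (1 + a) ^ 3) a := by
  have h1 : HasDerivAt (fun z : ℂ => (1 + z) ^ 2) (2 * (1 + a)) a := by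
    simpa using ((hasDerivAt_id a).const_add 1).fun_pow 2
  have := (hasDerivAt_id' a).fun_div h1 (pow_ne_zero 2 h)
  refine this.congr_deriv ?_
  field_simp
  ring

private lemma hasDerivAt_B2 (a : ℂ) (h : a - 1 ≠ 0) :
    HasDerivAt (fun z : ℂ => z / (z - 1) ^ 2) (-(a + 1) / (a - 1) ^ 3) a := by
  have h1 : HasDerivAt (fun z : ℂ => (z - 1) ^ 2) (2 * (a - 1)) a := by
    simpa using ((hasDerivAt_id a).sub_const 1).fun_pow 2
  have := (hasDerivAt_id' a).fun_div h1 (pow_ne_zero 2 h)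
  refine this.congr_deriv ?_
  field_simp
  ring

private lemma hasDerivAt_G1 (z₁ z₂ z₃ a : ℂ) (hz1a : z₁ - a ≠ 0) (hsp : a ∈ slitPlane)
    (hb : 1 + a ≠ 0) (ha : a ≠ 0) (hz₂ : z₂ ≠ 0) (hz₃ : z₃ ≠ 0)
    (h2 : a - z₂ ≠ 0) (h3 : a - z₃ ≠ 0) (hi2 : a⁻¹ - z₂ ≠ 0) (hi3 : a⁻¹ - z₃ ≠ 0) :
    HasDerivAt (fun z => (1 / (z₁ - z) + Complex.log z / z₁) * (z / (1 + z) ^ 2) *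
        (W02 z z₂ * W02 z⁻¹ z₃ + W02 z z₃ * W02 z⁻¹ z₂))
      (((1 / (z₁ - a) ^ 2 + a⁻¹ / z₁) * (a / (1 + a) ^ 2) +
          (1 / (z₁ - a) + Complex.log a / z₁) * ((1 - a) / (1 + a) ^ 3)) *
        (W02 a z₂ * W02 a⁻¹ z₃ + W02 a z₃ * W02 a⁻¹ z₂) +
        (1 / (z₁ - a) + Complex.log a / z₁) * (a / (1 + a) ^ 2) *
          ((-2 / (a - z₂) ^ 3 - 1 / (a ^ 2 * z₂)) * W02 a⁻¹ z₃ +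
            W02 a z₂ * ((-2 / (a⁻¹ - z₃) ^ 3 - 1 / ((a⁻¹) ^ 2 * z₃)) * (-(a ^ 2)⁻¹)) +
            ((-2 / (a - z₃) ^ 3 - 1 / (a ^ 2 * z₃)) * W02 a⁻¹ z₂ +
              W02 a z₃ * ((-2 / (a⁻¹ - z₂) ^ 3 - 1 / ((a⁻¹) ^ 2 * z₂)) * (-(a ^ 2)⁻¹))))) a :=
  ((hasDerivAt_A1 z₁ a hz1a hsp).mul (hasDerivAt_B1 a hb)).mul
    (hasDerivAt_S_s9 z₂ z₃ a ha hz₂ hz₃ h2 h3 hi2 hi3)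

private lemma hasDerivAt_G2 (z₁ z₂ z₃ a : ℂ) (hz1a : z₁ - a ≠ 0) (hsp : -a ∈ slitPlane)
    (hb : a - 1 ≠ 0) (ha : a ≠ 0) (hz₂ : z₂ ≠ 0) (hz₃ : z₃ ≠ 0)
    (h2 : a - z₂ ≠ 0) (h3 : a - z₃ ≠ 0) (hi2 : a⁻¹ - z₂ ≠ 0) (hi3 : a⁻¹ - z₃ ≠ 0) :
    HasDerivAt (fun z => (1 / (z₁ - z) + (Complex.log (-z) + (Real.pi : ℂ) * Complex.I) / z₁) *
        (z / (z - 1) ^ 2) * (W02 z z₂ * W02 z⁻¹ z₃ + W02 z z₃ * W02 z⁻¹ z₂))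
      (((1 / (z₁ - a) ^ 2 + -(-a)⁻¹ / z₁) * (a / (a - 1) ^ 2) +
          (1 / (z₁ - a) + (Complex.log (-a) + (Real.pi : ℂ) * Complex.I) / z₁) *
            (-(a + 1) / (a - 1) ^ 3)) *
        (W02 a z₂ * W02 a⁻¹ z₃ + W02 a z₃ * W02 a⁻¹ z₂) +
        (1 / (z₁ - a) + (Complex.log (-a) + (Real.pi : ℂ) * Complex.I) / z₁) *
          (a / (a - 1) ^ 2) *
          ((-2 / (a - z₂) ^ 3 - 1 / (a ^ 2 * z₂)) * W02 a⁻¹ z₃ +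
            W02 a z₂ * ((-2 / (a⁻¹ - z₃) ^ 3 - 1 / ((a⁻¹) ^ 2 * z₃)) * (-(a ^ 2)⁻¹)) +
            ((-2 / (a - z₃) ^ 3 - 1 / (a ^ 2 * z₃)) * W02 a⁻¹ z₂ +
              W02 a z₃ * ((-2 / (a⁻¹ - z₂) ^ 3 - 1 / ((a⁻¹) ^ 2 * z₂)) * (-(a ^ 2)⁻¹))))) a :=
  ((hasDerivAt_A2 z₁ a hz1a hsp).mul (hasDerivAt_B2 a hb)).mul
    (hasDerivAt_S_s9 z₂ z₃ a ha hz₂ hz₃ h2 h3 hi2 hi3)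

private lemma deriv_eq_smul_circleIntegral' {R : ℝ} {c : ℂ} {f : ℂ → ℂ} (hR : 0 < R)
    (hf : DiffContOnCl ℂ f (ball c R)) :
    deriv f c = (2 * Real.pi * I : ℂ)⁻¹ • ∮ z in C(c, R), (z - c) ^ (-2 : ℤ) • f z := by
  have h := hf.deriv_eq_smul_circleIntegral hR
  have h2 : (2 * Real.pi * I : ℂ) ≠ 0 := by simp [Real.pi_ne_zero, I_ne_zero]
  have hc : (∮ z in C(c, R), (z - c) ^ (-2 : ℤ) • f z) =
      ∮ z in C(c, R), (1 / (z - c) ^ 2) • f z := by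
    congr 1; funext z; rw [zpow_neg, one_div]; norm_cast
  rw [hc, h, smul_smul, inv_mul_cancel₀ h2, one_smul]

set_option maxHeartbeats 1000000 in
private lemma half1 (z₁ z₂ z₃ : ℂ)
    (h10 : z₁ ≠ 0) (h20 : z₂ ≠ 0) (h30 : z₃ ≠ 0)
    (e11 : z₁ - 1 ≠ 0) (e21 : z₂ - 1 ≠ 0) (e31 : z₃ - 1 ≠ 0) :
    (((1 / (z₁ - 1) ^ 2 + (1:ℂ)⁻¹ / z₁) * (1 / (1 + 1) ^ 2) +
          (1 / (z₁ - 1) + Complex.log 1 / z₁) * ((1 - 1) / (1 + 1) ^ 3)) *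
        (W02 1 z₂ * W02 (1:ℂ)⁻¹ z₃ + W02 1 z₃ * W02 (1:ℂ)⁻¹ z₂) +
        (1 / (z₁ - 1) + Complex.log 1 / z₁) * (1 / (1 + 1) ^ 2) *
          ((-2 / (1 - z₂) ^ 3 - 1 / (1 ^ 2 * z₂)) * W02 (1:ℂ)⁻¹ z₃ +
            W02 1 z₂ * ((-2 / ((1:ℂ)⁻¹ - z₃) ^ 3 - 1 / (((1:ℂ)⁻¹) ^ 2 * z₃)) * (-((1:ℂ) ^ 2)⁻¹)) +
            ((-2 / (1 - z₃) ^ 3 - 1 / (1 ^ 2 * z₃)) * W02 (1:ℂ)⁻¹ z₂ +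
              W02 1 z₃ * ((-2 / ((1:ℂ)⁻¹ - z₂) ^ 3 - 1 / (((1:ℂ)⁻¹) ^ 2 * z₂)) * (-((1:ℂ) ^ 2)⁻¹)))))
    =
      (1 / (2 * z₁ * z₂ * z₃)) *
        ((z₁ ^ 2 - z₁ + 1) / (z₁ - 1) ^ 2 * ((z₂ ^ 2 - z₂ + 1) / (z₂ - 1) ^ 2) *
            ((z₃ ^ 2 - z₃ + 1) / (z₃ - 1) ^ 2)) := by
  have hDS : ((-2 / (1 - z₂) ^ 3 - 1 / ((1:ℂ) ^ 2 * z₂)) * W02 (1:ℂ)⁻¹ z₃ +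
            W02 1 z₂ * ((-2 / ((1:ℂ)⁻¹ - z₃) ^ 3 - 1 / (((1:ℂ)⁻¹) ^ 2 * z₃)) * (-((1:ℂ) ^ 2)⁻¹)) +
            ((-2 / (1 - z₃) ^ 3 - 1 / ((1:ℂ) ^ 2 * z₃)) * W02 (1:ℂ)⁻¹ z₂ +
              W02 1 z₃ * ((-2 / ((1:ℂ)⁻¹ - z₂) ^ 3 - 1 / (((1:ℂ)⁻¹) ^ 2 * z₂)) * (-((1:ℂ) ^ 2)⁻¹)))) = 0 := by
    simp only [inv_one, one_pow, mul_one, one_mul]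
    ring
  rw [hDS, mul_zero, add_zero]
  simp only [W02, Complex.log_one, inv_one, one_div, sub_self, zero_div, mul_zero, add_zero,
    zero_mul, zero_div]
  norm_num
  rw [show ((1 - z₂) ^ 2 : ℂ) = (z₂ - 1)^2 by ring, show ((1 - z₃) ^ 2 : ℂ) = (z₃ - 1)^2 by ring]
  field_simp
  ring

set_option maxHeartbeats 1000000 in
private lemma half2 (z₁ z₂ z₃ : ℂ)
    (h10 : z₁ ≠ 0) (h20 : z₂ ≠ 0) (h30 : z₃ ≠ 0)
    (f11 : z₁ + 1 ≠ 0) (f21 : z₂ + 1 ≠ 0) (f31 : z₃ + 1 ≠ 0) :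
    (((1 / (z₁ - (-1)) ^ 2 + -(-(-1:ℂ))⁻¹ / z₁) * ((-1) / ((-1:ℂ) - 1) ^ 2) +
          (1 / (z₁ - (-1)) + (Complex.log (-(-1)) + (Real.pi : ℂ) * Complex.I) / z₁) *
            (-((-1:ℂ) + 1) / ((-1:ℂ) - 1) ^ 3)) *
        (W02 (-1) z₂ * W02 (-1:ℂ)⁻¹ z₃ + W02 (-1) z₃ * W02 (-1:ℂ)⁻¹ z₂) +
        (1 / (z₁ - (-1)) + (Complex.log (-(-1)) + (Real.pi : ℂ) * Complex.I) / z₁) *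
          ((-1) / ((-1:ℂ) - 1) ^ 2) *
          ((-2 / ((-1) - z₂) ^ 3 - 1 / ((-1:ℂ) ^ 2 * z₂)) * W02 (-1:ℂ)⁻¹ z₃ +
            W02 (-1) z₂ * ((-2 / ((-1:ℂ)⁻¹ - z₃) ^ 3 - 1 / (((-1:ℂ)⁻¹) ^ 2 * z₃)) * (-((-1:ℂ) ^ 2)⁻¹)) +
            ((-2 / ((-1) - z₃) ^ 3 - 1 / ((-1:ℂ) ^ 2 * z₃)) * W02 (-1:ℂ)⁻¹ z₂ +
              W02 (-1) z₃ * ((-2 / ((-1:ℂ)⁻¹ - z₂) ^ 3 - 1 / (((-1:ℂ)⁻¹) ^ 2 * z₂)) * (-((-1:ℂ) ^ 2)⁻¹)))))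
    =
      (1 / (2 * z₁ * z₂ * z₃)) *
        ((z₁ ^ 2 + z₁ + 1) / (z₁ + 1) ^ 2 * ((z₂ ^ 2 + z₂ + 1) / (z₂ + 1) ^ 2) *
            ((z₃ ^ 2 + z₃ + 1) / (z₃ + 1) ^ 2)) := by
  have hDS : ((-2 / ((-1) - z₂) ^ 3 - 1 / ((-1:ℂ) ^ 2 * z₂)) * W02 (-1:ℂ)⁻¹ z₃ +
            W02 (-1) z₂ * ((-2 / ((-1:ℂ)⁻¹ - z₃) ^ 3 - 1 / (((-1:ℂ)⁻¹) ^ 2 * z₃)) * (-((-1:ℂ) ^ 2)⁻¹)) +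
            ((-2 / ((-1) - z₃) ^ 3 - 1 / ((-1:ℂ) ^ 2 * z₃)) * W02 (-1:ℂ)⁻¹ z₂ +
              W02 (-1) z₃ * ((-2 / ((-1:ℂ)⁻¹ - z₂) ^ 3 - 1 / (((-1:ℂ)⁻¹) ^ 2 * z₂)) * (-((-1:ℂ) ^ 2)⁻¹)))) = 0 := by
    norm_num
    ring
  rw [hDS, mul_zero, add_zero]
  norm_num [W02]
  have k21 : (-1 : ℂ) - z₂ ≠ 0 := fun h => f21 (by linear_combination -h)
  have k31 : (-1 : ℂ) - z₃ ≠ 0 := fun h => f31 (by linear_combination -h)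
  have m2 : (-z₂ : ℂ) ≠ 0 := neg_ne_zero.mpr h20
  have m3 : (-z₃ : ℂ) ≠ 0 := neg_ne_zero.mpr h30
  field_simp
  ring


/-- The `(g,n) = (0,3)` case of the local topological recursion on the spectral
curve `x = z + 1/z`, `y = z`, `ω₀₂ = dz₁dz₂/(z₁-z₂)² + dz₁dz₂/(z₁z₂)`: the sum of
the two residues at the branch points `z = ±1`, written as circle integrals,
equals the generating function `Ω₀,₃/(dz₁dz₂dz₃)`. -/
theorem local_TR_03 (z₁ z₂ z₃ : ℂ)
    (h₁ : z₁ ≠ 0 ∧ z₁ ≠ 1 ∧ z₁ ≠ -1) (h₂ : z₂ ≠ 0 ∧ z₂ ≠ 1 ∧ z₂ ≠ -1)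
    (h₃ : z₃ ≠ 0 ∧ z₃ ≠ 1 ∧ z₃ ≠ -1) :
    ∃ ε₀ : ℝ, 0 < ε₀ ∧ ∀ ε : ℝ, 0 < ε → ε < ε₀ →
      (1 / (2 * Real.pi * Complex.I)) *
        ((∮ z in C(1, ε),
            (1 / (z₁ - z) + Complex.log z / z₁) * (z / (1 - z ^ 2) ^ 2) *
              (W02 z z₂ * W02 z⁻¹ z₃ + W02 z z₃ * W02 z⁻¹ z₂)) +
          (∮ z in C(-1, ε),
            (1 / (z₁ - z) + (Complex.log (-z) + Real.pi * Complex.I) / z₁) *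
              (z / (1 - z ^ 2) ^ 2) *
              (W02 z z₂ * W02 z⁻¹ z₃ + W02 z z₃ * W02 z⁻¹ z₂))) =
      (1 / (2 * z₁ * z₂ * z₃)) *
        ((z₁ ^ 2 - z₁ + 1) / (z₁ - 1) ^ 2 * ((z₂ ^ 2 - z₂ + 1) / (z₂ - 1) ^ 2) *
            ((z₃ ^ 2 - z₃ + 1) / (z₃ - 1) ^ 2) +
          (z₁ ^ 2 + z₁ + 1) / (z₁ + 1) ^ 2 * ((z₂ ^ 2 + z₂ + 1) / (z₂ + 1) ^ 2) *
            ((z₃ ^ 2 + z₃ + 1) / (z₃ + 1) ^ 2)) := by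
  obtain ⟨h10, h11, h1m⟩ := h₁
  obtain ⟨h20, h21, h2m⟩ := h₂
  obtain ⟨h30, h31, h3m⟩ := h₃
  have n11 : (1 : ℂ) ≠ z₁ := Ne.symm h11
  have n12 : (1 : ℂ) ≠ z₂ := Ne.symm h21
  have n13 : (1 : ℂ) ≠ z₃ := Ne.symm h31
  have n14 : (1 : ℂ) ≠ z₂⁻¹ := fun h => h21 (inv_eq_one.mp h.symm)
  have n15 : (1 : ℂ) ≠ z₃⁻¹ := fun h => h31 (inv_eq_one.mp h.symm)
  have n21 : (-1 : ℂ) ≠ z₁ := fun h => h1m h.symm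
  have n22 : (-1 : ℂ) ≠ z₂ := fun h => h2m h.symm
  have n23 : (-1 : ℂ) ≠ z₃ := fun h => h3m h.symm
  have n24 : (-1 : ℂ) ≠ z₂⁻¹ := fun h => h2m (by rw [← inv_inv z₂, ← h]; norm_num)
  have n25 : (-1 : ℂ) ≠ z₃⁻¹ := fun h => h3m (by rw [← inv_inv z₃, ← h]; norm_num)
  refine ⟨min (1/2) (min (dist (1:ℂ) z₁) (min (dist (1:ℂ) z₂) (min (dist (1:ℂ) z₃)
    (min (dist (1:ℂ) z₂⁻¹) (min (dist (1:ℂ) z₃⁻¹) (min (dist (-1:ℂ) z₁) (min (dist (-1:ℂ) z₂)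
    (min (dist (-1:ℂ) z₃) (min (dist (-1:ℂ) z₂⁻¹) (dist (-1:ℂ) z₃⁻¹)))))))))), ?_, ?_⟩
  · simp only [lt_min_iff]
    exact ⟨by norm_num, dist_pos.mpr n11, dist_pos.mpr n12, dist_pos.mpr n13, dist_pos.mpr n14,
      dist_pos.mpr n15, dist_pos.mpr n21, dist_pos.mpr n22, dist_pos.mpr n23, dist_pos.mpr n24,
      dist_pos.mpr n25⟩
  intro ε hε0 hεlt
  simp only [lt_min_iff] at hεlt
  obtain ⟨hhalf, d11, d12, d13, d14, d15, d21, d22, d23, d24, d25⟩ := hεlt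
  -- facts about points of the closed ball around 1
  have H1 : ∀ z ∈ closedBall (1:ℂ) ε, z₁ - z ≠ 0 ∧ z ∈ slitPlane ∧ 1 + z ≠ 0 ∧ z ≠ 0 ∧
      z - z₂ ≠ 0 ∧ z - z₃ ≠ 0 ∧ z⁻¹ - z₂ ≠ 0 ∧ z⁻¹ - z₃ ≠ 0 := by
    intro z hz
    have h1 : dist z 1 ≤ ε := mem_closedBall.mp hz
    rw [Complex.dist_eq] at h1
    have h2 := Complex.abs_re_le_norm (z - 1)
    have h3 : |z.re - 1| ≤ ε := by
      simpa [Complex.sub_re, Complex.one_re] using le_trans h2 h1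
    have h4 := abs_le.mp h3
    have hre : (1:ℝ)/2 < z.re := by linarith
    refine ⟨sub_ne_zero.mpr (Ne.symm (ne_of_mem_cb hz d11)),
      Complex.mem_slitPlane_iff.mpr (Or.inl (by linarith)),
      fun h => ?_, fun h => ?_,
      sub_ne_zero.mpr (ne_of_mem_cb hz d12), sub_ne_zero.mpr (ne_of_mem_cb hz d13),
      sub_ne_zero.mpr (fun h => (ne_of_mem_cb hz d14) (by rw [← h, inv_inv])),
      sub_ne_zero.mpr (fun h => (ne_of_mem_cb hz d15) (by rw [← h, inv_inv]))⟩
    · have : z = -1 := by linear_combination h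
      rw [this] at hre; norm_num at hre
    · rw [h] at hre; norm_num at hre
  -- facts about points of the closed ball around -1
  have H2 : ∀ z ∈ closedBall (-1:ℂ) ε, z₁ - z ≠ 0 ∧ -z ∈ slitPlane ∧ z - 1 ≠ 0 ∧ z ≠ 0 ∧
      z - z₂ ≠ 0 ∧ z - z₃ ≠ 0 ∧ z⁻¹ - z₂ ≠ 0 ∧ z⁻¹ - z₃ ≠ 0 := by
    intro z hz
    have h1 : dist z (-1) ≤ ε := mem_closedBall.mp hz
    rw [Complex.dist_eq] at h1
    have h2 := Complex.abs_re_le_norm (z - (-1))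
    have h3 : |z.re + 1| ≤ ε := by
      simpa [Complex.sub_re, Complex.neg_re, Complex.one_re, sub_neg_eq_add] using
        le_trans h2 h1
    have h4 := abs_le.mp h3
    have hre : z.re < -(1/2 : ℝ) := by linarith
    refine ⟨sub_ne_zero.mpr (Ne.symm (ne_of_mem_cb hz d21)),
      Complex.mem_slitPlane_iff.mpr (Or.inl (by simp [Complex.neg_re]; linarith)),
      fun h => ?_, fun h => ?_,
      sub_ne_zero.mpr (ne_of_mem_cb hz d22), sub_ne_zero.mpr (ne_of_mem_cb hz d23),
      sub_ne_zero.mpr (fun h => (ne_of_mem_cb hz d24) (by rw [← h, inv_inv])),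
      sub_ne_zero.mpr (fun h => (ne_of_mem_cb hz d25) (by rw [← h, inv_inv]))⟩
    · have : z = 1 := by linear_combination h
      rw [this] at hre; norm_num at hre
    · rw [h] at hre; norm_num at hre
  have h2pi : (2 * (Real.pi : ℂ) * Complex.I) ≠ 0 := by
    simp [Real.pi_ne_zero, Complex.I_ne_zero]
  -- first circle integral
  have hdiff1 : DifferentiableOn ℂ
      (fun z => (1 / (z₁ - z) + Complex.log z / z₁) * (z / (1 + z) ^ 2) *
        (W02 z z₂ * W02 z⁻¹ z₃ + W02 z z₃ * W02 z⁻¹ z₂)) (closedBall (1:ℂ) ε) := by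
    intro z hz
    obtain ⟨a1, a2, a3, a4, a5, a6, a7, a8⟩ := H1 z hz
    exact (hasDerivAt_G1 z₁ z₂ z₃ z a1 a2 a3 a4 h20 h30 a5 a6 a7 a8).differentiableAt.differentiableWithinAt
  have hder1 := deriv_eq_smul_circleIntegral' hε0
    ((hdiff1.mono closure_ball_subset_closedBall).diffContOnCl)
  have hEq1 : Set.EqOn
      (fun z => (1 / (z₁ - z) + Complex.log z / z₁) * (z / (1 - z ^ 2) ^ 2) *
        (W02 z z₂ * W02 z⁻¹ z₃ + W02 z z₃ * W02 z⁻¹ z₂))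
      (fun z => (z - 1) ^ (-2 : ℤ) •
        ((1 / (z₁ - z) + Complex.log z / z₁) * (z / (1 + z) ^ 2) *
          (W02 z z₂ * W02 z⁻¹ z₃ + W02 z z₃ * W02 z⁻¹ z₂))) (sphere (1:ℂ) ε) := by
    intro z hz
    obtain ⟨a1, a2, a3, a4, a5, a6, a7, a8⟩ := H1 z (sphere_subset_closedBall hz)
    have hzp : (z - 1 : ℂ) ^ (-2 : ℤ) = ((z - 1) ^ 2)⁻¹ := by
      rw [zpow_neg]; norm_cast
    have key : z / (1 - z ^ 2) ^ 2 = ((z - 1) ^ 2)⁻¹ * (z / (1 + z) ^ 2) := by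
      rw [show ((1:ℂ) - z^2)^2 = (1+z)^2 * (z-1)^2 by ring, ← div_div, inv_mul_eq_div]
    show _ = _
    simp only [smul_eq_mul, hzp]
    rw [key]
    ring
  have hint1 : (∮ z in C(1, ε),
      (1 / (z₁ - z) + Complex.log z / z₁) * (z / (1 - z ^ 2) ^ 2) *
        (W02 z z₂ * W02 z⁻¹ z₃ + W02 z z₃ * W02 z⁻¹ z₂)) =
      (2 * (Real.pi : ℂ) * Complex.I) •
        deriv (fun z => (1 / (z₁ - z) + Complex.log z / z₁) * (z / (1 + z) ^ 2) *
          (W02 z z₂ * W02 z⁻¹ z₃ + W02 z z₃ * W02 z⁻¹ z₂)) 1 := by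
    rw [circleIntegral.integral_congr hε0.le hEq1, hder1, smul_smul,
      mul_inv_cancel₀ h2pi, one_smul]
  -- second circle integral
  have hdiff2 : DifferentiableOn ℂ
      (fun z => (1 / (z₁ - z) + (Complex.log (-z) + (Real.pi : ℂ) * Complex.I) / z₁) *
        (z / (z - 1) ^ 2) * (W02 z z₂ * W02 z⁻¹ z₃ + W02 z z₃ * W02 z⁻¹ z₂))
      (closedBall (-1:ℂ) ε) := by
    intro z hz
    obtain ⟨a1, a2, a3, a4, a5, a6, a7, a8⟩ := H2 z hz
    exact (hasDerivAt_G2 z₁ z₂ z₃ z a1 a2 a3 a4 h20 h30 a5 a6 a7 a8).differentiableAt.differentiableWithinAt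
  have hder2 := deriv_eq_smul_circleIntegral' hε0
    ((hdiff2.mono closure_ball_subset_closedBall).diffContOnCl)
  have hEq2 : Set.EqOn
      (fun z => (1 / (z₁ - z) + (Complex.log (-z) + (Real.pi : ℂ) * Complex.I) / z₁) *
        (z / (1 - z ^ 2) ^ 2) * (W02 z z₂ * W02 z⁻¹ z₃ + W02 z z₃ * W02 z⁻¹ z₂))
      (fun z => (z - (-1)) ^ (-2 : ℤ) •
        ((1 / (z₁ - z) + (Complex.log (-z) + (Real.pi : ℂ) * Complex.I) / z₁) *
          (z / (z - 1) ^ 2) * (W02 z z₂ * W02 z⁻¹ z₃ + W02 z z₃ * W02 z⁻¹ z₂)))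
      (sphere (-1:ℂ) ε) := by
    intro z hz
    have hzp : (z - (-1) : ℂ) ^ (-2 : ℤ) = ((z - (-1)) ^ 2)⁻¹ := by
      rw [zpow_neg]; norm_cast
    have key : z / (1 - z ^ 2) ^ 2 = ((z - (-1)) ^ 2)⁻¹ * (z / (z - 1) ^ 2) := by
      rw [show ((1:ℂ) - z^2)^2 = (z - 1)^2 * (z - (-1))^2 by ring, ← div_div, inv_mul_eq_div]
    show _ = _
    simp only [smul_eq_mul, hzp]
    rw [key]
    ring
  have hint2 : (∮ z in C(-1, ε),
      (1 / (z₁ - z) + (Complex.log (-z) + (Real.pi : ℂ) * Complex.I) / z₁) *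
        (z / (1 - z ^ 2) ^ 2) * (W02 z z₂ * W02 z⁻¹ z₃ + W02 z z₃ * W02 z⁻¹ z₂)) =
      (2 * (Real.pi : ℂ) * Complex.I) •
        deriv (fun z => (1 / (z₁ - z) + (Complex.log (-z) + (Real.pi : ℂ) * Complex.I) / z₁) *
          (z / (z - 1) ^ 2) * (W02 z z₂ * W02 z⁻¹ z₃ + W02 z z₃ * W02 z⁻¹ z₂)) (-1) := by
    rw [circleIntegral.integral_congr hε0.le hEq2, hder2, smul_smul,
      mul_inv_cancel₀ h2pi, one_smul]
  -- derivative values at the two branch points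
  have e11 : z₁ - 1 ≠ 0 := sub_ne_zero.mpr h11
  have e21 : z₂ - 1 ≠ 0 := sub_ne_zero.mpr h21
  have e31 : z₃ - 1 ≠ 0 := sub_ne_zero.mpr h31
  have f11 : z₁ + 1 ≠ 0 := fun h => h1m (by linear_combination h)
  have f21 : z₂ + 1 ≠ 0 := fun h => h2m (by linear_combination h)
  have f31 : z₃ + 1 ≠ 0 := fun h => h3m (by linear_combination h)
  have g21 : (1 : ℂ) - z₂ ≠ 0 := fun h => e21 (by linear_combination -h)
  have g31 : (1 : ℂ) - z₃ ≠ 0 := fun h => e31 (by linear_combination -h)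
  have k21 : (-1 : ℂ) - z₂ ≠ 0 := fun h => f21 (by linear_combination -h)
  have k31 : (-1 : ℂ) - z₃ ≠ 0 := fun h => f31 (by linear_combination -h)
  have hd1 := (hasDerivAt_G1 z₁ z₂ z₃ 1 e11
    (Complex.mem_slitPlane_iff.mpr (Or.inl (by norm_num))) (by norm_num) one_ne_zero h20 h30
    g21 g31 (by rw [inv_one]; exact g21) (by rw [inv_one]; exact g31)).deriv
  have hd2 := (hasDerivAt_G2 z₁ z₂ z₃ (-1)
    (fun h => h1m (by linear_combination h))
    (by rw [neg_neg]; exact Complex.mem_slitPlane_iff.mpr (Or.inl (by norm_num)))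
    (by norm_num) (by norm_num) h20 h30 k21 k31
    (by rw [show ((-1:ℂ))⁻¹ = -1 by norm_num]; exact k21)
    (by rw [show ((-1:ℂ))⁻¹ = -1 by norm_num]; exact k31)).deriv
  rw [hint1, hint2, hd1, hd2, smul_eq_mul, smul_eq_mul, ← mul_add, one_div,
    inv_mul_cancel_left₀ h2pi,
    half1 z₁ z₂ z₃ h10 h20 h30 e11 e21 e31,
    half2 z₁ z₂ z₃ h10 h20 h30 f11 f21 f31]
  ring
end
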